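/- arXiv:2112.12920 — 6 statements merged into one kernel-verified Lean document; each statement's English description precedes it below -/
import Mathlib

section
/- Let d ≥ 2, γ > 0, B' > 0 and N a positive integer. Let C_1,…,C_N ≥ 0 be reals, A_1,…,A_N ∈ [0,1]^d, and λ_1,…,λ_N ∈ Δ^{d−1}. For each t let x̂_t ∈ [0,1] satisfy C_t·x̂_t − γ·⟨λ_t, A_t⟩·x̂_t ≥ C_t·x − γ·⟨λ_t, A_t⟩·x for all x ∈ [0,1]. Let τ be the least index t such that some coordinate of Σ_{s≤t} A_s·x̂_s exceeds B', and τ := N if no such t exists. If the regret inequality Σ_{t≤τ} ⟨λ_t, A_t⟩·x̂_t ≥ (1/2)·max_{λ∈Δ^{d−1}} Σ_{t≤τ} ⟨λ, A_t⟩·x̂_t − 2·log d holds, then for every subset S ⊆ {1,…,N} and every x* ∈ [0,1]^N: Σ_{t≤τ} C_t·x̂_t ≥ min{ γ·B'/2 , Σ_{t∈S} (C_t − γ·⟨λ_t, A_t⟩)·x*_t } − 2·γ·log d. -/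
/-- Deterministic core of the single-interval analysis: if each `x̂_t` is a
best response to the Lagrangified value, `τ` is the first time the scaled budget `B'` is
violated (or `N`), and the low-regret guarantee holds, then for every `S ⊆ {1,…,N}` and
`x* ∈ [0,1]^N`:
`Σ_{t≤τ} C_t x̂_t ≥ min{γB'/2, Σ_{t∈S} (C_t − γ⟨λ_t,A_t⟩)x*_t} − 2γ log d`. -/
theorem single_interval_value_bound
    (d : ℕ) (hd : 2 ≤ d) (γ B' : ℝ) (hγ : 0 < γ) (hB : 0 < B')
    (N : ℕ) (hN : 0 < N)
    (C : ℕ → ℝ) (hC : ∀ t, 0 ≤ C t)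
    (A : ℕ → Fin d → ℝ) (hA : ∀ t i, A t i ∈ Set.Icc (0 : ℝ) 1)
    (lam : ℕ → Fin d → ℝ)
    (hlam : ∀ t, (∀ i, lam t i ∈ Set.Icc (0 : ℝ) 1) ∧ ∑ i, lam t i = 1)
    (xhat : ℕ → ℝ) (hxhat : ∀ t, xhat t ∈ Set.Icc (0 : ℝ) 1)
    (hbest : ∀ t, ∀ x ∈ Set.Icc (0 : ℝ) 1,
      C t * x - γ * (∑ i, lam t i * A t i) * x
        ≤ C t * xhat t - γ * (∑ i, lam t i * A t i) * xhat t)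
    (τ : ℕ) (hτ1 : 1 ≤ τ) (hτN : τ ≤ N)
    (hτbefore : ∀ t, 1 ≤ t → t < τ → ∀ i, ∑ s ∈ Finset.Icc 1 t, A s i * xhat s ≤ B')
    (hτdef : (∃ i, B' < ∑ s ∈ Finset.Icc 1 τ, A s i * xhat s) ∨ τ = N)
    (hregret : ∀ lam' : Fin d → ℝ, (∀ i, lam' i ∈ Set.Icc (0 : ℝ) 1) → (∑ i, lam' i = 1) →
      (1 / 2) * (∑ t ∈ Finset.Icc 1 τ, (∑ i, lam' i * A t i) * xhat t) - 2 * Real.log d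
        ≤ ∑ t ∈ Finset.Icc 1 τ, (∑ i, lam t i * A t i) * xhat t) :
    ∀ S ⊆ Finset.Icc 1 N, ∀ xstar : ℕ → ℝ, (∀ t, xstar t ∈ Set.Icc (0 : ℝ) 1) →
      min (γ * B' / 2) (∑ t ∈ S, (C t - γ * (∑ i, lam t i * A t i)) * xstar t)
          - 2 * γ * Real.log d
        ≤ ∑ t ∈ Finset.Icc 1 τ, C t * xhat t := by
  intro S hS xstar hxstar
  have hlogd : (0:ℝ) ≤ Real.log d := Real.log_nonneg (by exact_mod_cast Nat.one_le_of_lt hd)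
  have hterm0 : ∀ t, 0 ≤ C t * xhat t - γ * (∑ i, lam t i * A t i) * xhat t := by
    intro t
    have := hbest t 0 ⟨le_refl 0, zero_le_one⟩
    simpa using this
  have hSnn : ∀ t, 0 ≤ (∑ i, lam t i * A t i) * xhat t := by
    intro t
    apply mul_nonneg
    · exact Finset.sum_nonneg fun i _ => mul_nonneg ((hlam t).1 i).1 (hA t i).1
    · exact (hxhat t).1
  set P := ∑ t ∈ Finset.Icc 1 τ, (∑ i, lam t i * A t i) * xhat t with hP
  have hPnn : 0 ≤ P := Finset.sum_nonneg fun t _ => hSnn t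
  have hVγP : γ * P ≤ ∑ t ∈ Finset.Icc 1 τ, C t * xhat t := by
    rw [hP, Finset.mul_sum]
    apply Finset.sum_le_sum
    intro t _
    have h := hterm0 t
    nlinarith [h]
  rcases hτdef with ⟨i, hi⟩ | hτeq
  · -- budget violated
    set lam' : Fin d → ℝ := fun j => if j = i then 1 else 0 with hlam'
    have h1 : ∀ j, lam' j ∈ Set.Icc (0:ℝ) 1 := by
      intro j; simp only [hlam']; split_ifs <;> simp
    have h2 : ∑ j, lam' j = 1 := by simp [hlam']
    have h3 : ∀ t, ∑ j, lam' j * A t j = A t i := by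
      intro t; simp [hlam', ite_mul]
    have hr := hregret lam' h1 h2
    have hrw : ∑ t ∈ Finset.Icc 1 τ, (∑ j, lam' j * A t j) * xhat t
        = ∑ s ∈ Finset.Icc 1 τ, A s i * xhat s := by
      apply Finset.sum_congr rfl; intro t _; rw [h3]
    rw [hrw] at hr
    have : γ * B' / 2 - 2 * γ * Real.log d ≤ ∑ t ∈ Finset.Icc 1 τ, C t * xhat t := by
      nlinarith [hr, hi, hVγP, hγ.le]
    calc min (γ * B' / 2) (∑ t ∈ S, (C t - γ * (∑ i, lam t i * A t i)) * xstar t)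
          - 2 * γ * Real.log d ≤ γ * B' / 2 - 2 * γ * Real.log d := by
            have := min_le_left (γ * B' / 2) (∑ t ∈ S, (C t - γ * (∑ i, lam t i * A t i)) * xstar t)
            linarith
      _ ≤ _ := this
  · subst hτeq
    have hstep : ∑ t ∈ S, (C t - γ * (∑ i, lam t i * A t i)) * xstar t
        ≤ ∑ t ∈ Finset.Icc 1 τ, (C t * xhat t - γ * (∑ i, lam t i * A t i) * xhat t) := by
      calc ∑ t ∈ S, (C t - γ * (∑ i, lam t i * A t i)) * xstar t
          ≤ ∑ t ∈ S, (C t * xhat t - γ * (∑ i, lam t i * A t i) * xhat t) := by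
            apply Finset.sum_le_sum
            intro t _
            have h := hbest t (xstar t) (hxstar t)
            nlinarith [h]
        _ ≤ _ := Finset.sum_le_sum_of_subset_of_nonneg hS fun t _ _ => hterm0 t
    have hsplit : ∑ t ∈ Finset.Icc 1 τ, (C t * xhat t - γ * (∑ i, lam t i * A t i) * xhat t)
        = (∑ t ∈ Finset.Icc 1 τ, C t * xhat t) - γ * P := by
      rw [hP, Finset.mul_sum, ← Finset.sum_sub_distrib]
      apply Finset.sum_congr rfl; intro t _; ring
    have hmin := min_le_right (γ * B' / 2) (∑ t ∈ S, (C t - γ * (∑ i, lam t i * A t i)) * xstar t)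
    have hγP : 0 ≤ γ * P := mul_nonneg hγ.le hPnn
    have hlog2 : 0 ≤ 2 * γ * Real.log d := by positivity
    linarith [hstep, hsplit ▸ hstep]
end

section
/- Let OPT, B > 0 and let w_1,…,w_G be reals with 0 ≤ w_i ≤ OPT/B for all i and OPT/2 ≤ Σ_{i=1}^G w_i ≤ OPT. Let K ≥ 1 and let ξ_1,…,ξ_G be independent Bernoulli random variables each equal to 1 with probability 1/K. Then Pr( Σ_{i=1}^G ξ_i·w_i < OPT/(4K) ) ≤ 2·exp( −3B/(104K) ). -/
/-!
Chernoff's method for the lower tail. By Markov's inequality applied to `exp (-s S)`, the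
probability is at most `exp (s t) * E[exp (-s S)]`, and the expectation factorises over the
independent coordinates. Each factor `p e^{-x} + 1 - p` is at most `exp (p (x ^ 2 - x))` because
`e^{-x} ≤ 1 - x + x ^ 2` for `x ≥ 0`. Taking `s = B / (4 OPT)` makes every `x = s wᵢ ≤ 1/4`, so
`x ^ 2 - x ≤ -(3/4) x`, and the exponent comes out as `-B / (32 K)`, which beats `-3B / (104 K)`.
-/

open MeasureTheory ProbabilityTheory
open scoped NNReal

set_option linter.deprecated false

theorem PMF.integral_bernoulli_toMeasure {E : Type*} [NormedAddCommGroup E] [NormedSpace ℝ E]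
    [CompleteSpace E] {p : ℝ≥0} (hp : p ≤ 1) (f : Bool → E) :
    ∫ b, f b ∂(PMF.bernoulli p hp).toMeasure = (p : ℝ) • f true + (1 - (p : ℝ)) • f false := by
  simp [PMF.integral_eq_sum, PMF.bernoulli_apply, NNReal.coe_sub hp]

theorem mgf_ite_bernoulli {p : ℝ≥0} (hp : p ≤ 1) (a t : ℝ) :
    mgf (fun b : Bool => if b then a else 0) (PMF.bernoulli p hp).toMeasure t
      = p * Real.exp (t * a) + (1 - p) := by
  simp [mgf, PMF.integral_bernoulli_toMeasure]

theorem mgf_pi_sum {ι : Type*} [Fintype ι] {Ω : ι → Type*} [∀ i, MeasurableSpace (Ω i)]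
    (μ : ∀ i, Measure (Ω i)) [∀ i, SigmaFinite (μ i)] (X : ∀ i, Ω i → ℝ) (t : ℝ) :
    mgf (fun ω => ∑ i, X i (ω i)) (Measure.pi μ) t = ∏ i, mgf (X i) (μ i) t := by
  simp only [mgf, Finset.mul_sum, Real.exp_sum]
  exact integral_fintype_prod_eq_prod (μ := μ) fun i ω => Real.exp (t * X i ω)

theorem Real.exp_neg_le_one_sub_add_sq {x : ℝ} (hx : 0 ≤ x) : Real.exp (-x) ≤ 1 - x + x ^ 2 := by
  have h : (1 + x) * Real.exp (-x) ≤ 1 := by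
    calc (1 + x) * Real.exp (-x) ≤ Real.exp x * Real.exp (-x) := by
          gcongr; linarith [Real.add_one_le_exp x]
      _ = 1 := by rw [← Real.exp_add, add_neg_cancel, Real.exp_zero]
  nlinarith [Real.exp_pos (-x), pow_nonneg hx 3]

theorem bernoulli_mix_exp_neg_le {p x : ℝ} (hp : 0 ≤ p) (hx : 0 ≤ x) :
    p * Real.exp (-x) + (1 - p) ≤ Real.exp (p * (x ^ 2 - x)) :=
  calc p * Real.exp (-x) + (1 - p) ≤ p * (x ^ 2 - x) + 1 := by
        nlinarith [Real.exp_neg_le_one_sub_add_sq hx]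
    _ ≤ Real.exp (p * (x ^ 2 - x)) := Real.add_one_le_exp _

theorem measure_pi_bernoulli_weighted_sum_lt_le {ι : Type*} [Fintype ι] {p : ℝ≥0} (hp : p ≤ 1)
    {w : ι → ℝ} (hw : ∀ i, 0 ≤ w i) {s : ℝ} (hs : 0 ≤ s) (t : ℝ) :
    (Measure.pi fun _ : ι => (PMF.bernoulli p hp).toMeasure)
        {ξ | ∑ i, (if ξ i then w i else 0) < t}
      ≤ ENNReal.ofReal (Real.exp (s * t + p * ∑ i, ((s * w i) ^ 2 - s * w i))) := by
  set μ := Measure.pi fun _ : ι => (PMF.bernoulli p hp).toMeasure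
  have hmgf : mgf (fun ξ : ι → Bool => ∑ i, (if ξ i then w i else 0)) μ (-s)
      ≤ ∏ i, Real.exp (p * ((s * w i) ^ 2 - s * w i)) := by
    rw [mgf_pi_sum (fun _ : ι => (PMF.bernoulli p hp).toMeasure)
      (fun i (b : Bool) => if b then w i else 0)]
    refine Finset.prod_le_prod (fun i _ => mgf_nonneg) fun i _ => ?_
    rw [mgf_ite_bernoulli, neg_mul]
    exact bernoulli_mix_exp_neg_le p.coe_nonneg (mul_nonneg hs (hw i))
  have hchernoff := measure_le_le_exp_mul_mgf (μ := μ) t (neg_nonpos.mpr hs)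
    (Integrable.of_finite (f := fun ξ : ι → Bool =>
      Real.exp (-s * ∑ i, (if ξ i then w i else 0))))
  calc μ {ξ | ∑ i, (if ξ i then w i else 0) < t}
      ≤ μ {ξ | ∑ i, (if ξ i then w i else 0) ≤ t} :=
        measure_mono fun ξ (hξ : _ < t) => hξ.le
    _ = ENNReal.ofReal (μ.real {ξ | ∑ i, (if ξ i then w i else 0) ≤ t}) :=
        (ENNReal.ofReal_toReal (measure_ne_top _ _)).symm
    _ ≤ ENNReal.ofReal (Real.exp (s * t + p * ∑ i, ((s * w i) ^ 2 - s * w i))) := by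
        refine ENNReal.ofReal_le_ofReal (hchernoff.trans ?_)
        rw [Real.exp_add, Finset.mul_sum, Real.exp_sum, neg_neg]
        gcongr

theorem Finset.sum_sq_sub_self_le {ι : Type*} (s : Finset ι) {x : ι → ℝ} {c : ℝ}
    (h0 : ∀ i ∈ s, 0 ≤ x i) (hc : ∀ i ∈ s, x i ≤ c) :
    ∑ i ∈ s, (x i ^ 2 - x i) ≤ -(1 - c) * ∑ i ∈ s, x i := by
  rw [Finset.mul_sum]
  exact Finset.sum_le_sum fun i hi => by nlinarith [h0 i hi, hc i hi]

/-- Bernstein-type lower tail for `Σ ξᵢ·wᵢ` where the `ξᵢ` are independent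
Bernoulli(1/K) indicators and the weights satisfy `0 ≤ wᵢ ≤ OPT/B` with
`OPT/2 ≤ Σ wᵢ ≤ OPT`. -/
theorem bernoulli_value_concentration
    (G : ℕ) (OPT B K : ℝ) (hOPT : 0 < OPT) (hB : 0 < B) (hK : 1 ≤ K)
    (w : Fin G → ℝ) (hw0 : ∀ i, 0 ≤ w i) (hw1 : ∀ i, w i ≤ OPT / B)
    (hsum1 : OPT / 2 ≤ ∑ i, w i) :
    (Measure.pi fun _ : Fin G =>
        (PMF.bernoulli (Real.toNNReal (1 / K))
          (by
            have h1 : (1 : ℝ) / K ≤ 1 := by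
              rw [div_le_one (lt_of_lt_of_le one_pos hK)]; exact hK
            simpa using Real.toNNReal_le_toNNReal h1)).toMeasure)
      {ξ : Fin G → Bool | ∑ i, (if ξ i then w i else 0) < OPT / (4 * K)}
      ≤ ENNReal.ofReal (2 * Real.exp (-(3 * B) / (104 * K))) := by
  have hK0 : 0 < K := one_pos.trans_le hK
  set s := B / (4 * OPT) with hs
  have hs0 : 0 < s := by positivity
  have hsw : ∀ i, s * w i ≤ 1 / 4 := fun i =>
    calc s * w i ≤ s * (OPT / B) := by gcongr; exact hw1 i
      _ = 1 / 4 := by rw [hs]; field_simp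
  have hmass : B / 8 ≤ ∑ i, s * w i := by
    rw [← Finset.mul_sum]
    calc B / 8 = s * (OPT / 2) := by rw [hs]; field_simp; norm_num
      _ ≤ s * ∑ i, w i := by gcongr
  have hexponent := Finset.univ.sum_sq_sub_self_le (fun i _ => mul_nonneg hs0.le (hw0 i))
    fun i _ => hsw i
  refine (measure_pi_bernoulli_weighted_sum_lt_le _ hw0 hs0.le _).trans
    (ENNReal.ofReal_le_ofReal ?_)
  rw [Real.coe_toNNReal _ (by positivity)]
  have hst : s * (OPT / (4 * K)) = 1 / K * (B / 16) := by rw [hs]; field_simp; norm_num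
  calc Real.exp (s * (OPT / (4 * K)) + 1 / K * ∑ i, ((s * w i) ^ 2 - s * w i))
      = Real.exp (1 / K * (B / 16 + ∑ i, ((s * w i) ^ 2 - s * w i))) := by rw [hst, ← mul_add]
    _ ≤ Real.exp (1 / K * (-(3 / 104) * B)) := by gcongr; linarith
    _ = Real.exp (-(3 * B) / (104 * K)) := by ring_nf
    _ ≤ 2 * Real.exp (-(3 * B) / (104 * K)) := by linarith [Real.exp_pos (-(3 * B) / (104 * K))]
end

section
/- There exists a universal constant C > 0 such that the following holds. Let y^1,…,y^m ∈ [0,1]^d, let σ be a uniformly random permutation of {1,…,m}, and set Y^j := y^{σ(j)}. Fix a coordinate i ∈ {1,…,d}, let μ_i := (1/m)·Σ_{t=1}^m y^t_i, and let ε ∈ (0,1] and δ ∈ (0,1]. Then with probability at least 1 − δ/d, simultaneously for all j ≤ m/2: E[ Y^j_i | Y^1,…,Y^{j−1} ] ≤ (1+2ε)·μ_i + C·log(d/δ)/(m·ε). -/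
open MeasureTheory

/-- Discrete σ-algebra on the permutation group. -/
instance (m : ℕ) : MeasurableSpace (Equiv.Perm (Fin m)) := ⊤

/-- Uniform probability measure on the permutations of `Fin m`. -/
noncomputable def permUniform (m : ℕ) : Measure (Equiv.Perm (Fin m)) :=
  (PMF.uniformOfFintype (Equiv.Perm (Fin m))).toMeasure

/-!
Under the uniform measure on a finite space, conditioning on a map `π` is averaging over the
fibers of `π`. Given the first `j` observed vectors, the later positions are exchangeable, so
the conditional expectation of `Y_j` is the average `R_j` of the not-yet-observed values, and
`R_j` is a martingale along the observed prefixes. Doob's maximal inequality for the submartingale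
`exp (ε K R_j)`, with `K = m - J ≥ m / 2` the number of values left at the last index `J`,
bounds the probability that some `R_j` exceeds `a` by `exp (-ε K a) · E[exp (ε ∑_{p ≥ J} Y_p)]`.
Swapping two positions shows that a sample without replacement has a smaller exponential moment
than independent draws, which is at most `exp ((e^ε - 1) μ K) ≤ exp ((ε + ε²) μ K)`. With
`a = (1 + 2ε) μ + 2 log (d / δ) / (m ε)` the bound is `δ / d`.
-/

open Finset

namespace RandomOrder

section FiberAvg

variable {Ω β : Type*} [Fintype Ω] (π : Ω → β)

open Classical in
noncomputable def fiber (σ : Ω) : Finset Ω := {τ | π τ = π σ}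

noncomputable def fiberAvg (F : Ω → ℝ) (σ : Ω) : ℝ :=
  (∑ τ ∈ fiber π σ, F τ) / #(fiber π σ)

variable {π}

@[simp]
lemma mem_fiber {σ τ : Ω} : τ ∈ fiber π σ ↔ π τ = π σ := by
  simp [fiber]

lemma fiber_eq_of_eq {σ τ : Ω} (h : π σ = π τ) : fiber π σ = fiber π τ := by
  ext; simp [h]

lemma card_fiber_pos (σ : Ω) : 0 < (#(fiber π σ) : ℝ) := by
  exact_mod_cast Finset.card_pos.2 ⟨σ, mem_fiber.2 rfl⟩

lemma fiberAvg_eq_of_eq (F : Ω → ℝ) {σ τ : Ω} (h : π σ = π τ) :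
    fiberAvg π F σ = fiberAvg π F τ := by
  rw [fiberAvg, fiberAvg, fiber_eq_of_eq h]

lemma fiberAvg_of_fiber_const {F : Ω → ℝ} {σ : Ω} (hF : ∀ τ, π τ = π σ → F τ = F σ) :
    fiberAvg π F σ = F σ := by
  rw [fiberAvg, Finset.sum_congr rfl fun τ hτ => hF τ (mem_fiber.1 hτ), Finset.sum_const,
    nsmul_eq_mul, mul_div_cancel_left₀ _ (card_fiber_pos σ).ne']

lemma sum_fiberAvg_of_saturated (F : Ω → ℝ) {B : Finset Ω}
    (hB : ∀ σ ∈ B, ∀ τ, π τ = π σ → τ ∈ B) :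
    ∑ σ ∈ B, fiberAvg π F σ = ∑ σ ∈ B, F σ := by
  calc ∑ σ ∈ B, fiberAvg π F σ
      = ∑ σ ∈ B, ∑ τ ∈ fiber π σ, F τ / #(fiber π τ) := by
        refine Finset.sum_congr rfl fun σ _ => ?_
        rw [fiberAvg, Finset.sum_div]
        exact Finset.sum_congr rfl fun τ hτ => by rw [fiber_eq_of_eq (mem_fiber.1 hτ)]
    _ = ∑ τ ∈ B, ∑ σ ∈ fiber π τ, F τ / #(fiber π τ) := by
        refine Finset.sum_comm' fun σ τ => ?_
        simp only [mem_fiber]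
        exact ⟨fun ⟨hσ, hτ⟩ => ⟨hτ.symm, hB σ hσ τ hτ⟩,
          fun ⟨hσ, hτ⟩ => ⟨hB τ hτ σ hσ, hσ.symm⟩⟩
    _ = ∑ τ ∈ B, F τ := by
        refine Finset.sum_congr rfl fun τ _ => ?_
        rw [Finset.sum_const, nsmul_eq_mul, mul_div_cancel₀ _ (card_fiber_pos τ).ne']

theorem _root_.ConvexOn.map_fiberAvg_le {Φ : ℝ → ℝ} (hΦ : ConvexOn ℝ Set.univ Φ) (F : Ω → ℝ)
    (σ : Ω) :
    Φ (fiberAvg π F σ) ≤ fiberAvg π (Φ ∘ F) σ := by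
  have hc := card_fiber_pos (π := π) σ
  have h := hΦ.map_sum_le (t := fiber π σ) (w := fun _ => (#(fiber π σ) : ℝ)⁻¹) (p := F)
    (fun _ _ => by positivity) (by simp [hc.ne']) (fun _ _ => Set.mem_univ _)
  simpa only [fiberAvg, Finset.sum_div, smul_eq_mul, inv_mul_eq_div, Function.comp_apply]
    using h

end FiberAvg

section UniformMeasure

variable {Ω : Type*} [Fintype Ω]

lemma measureReal_uniformOfFintype_singleton [Nonempty Ω] [MeasurableSpace Ω]
    [MeasurableSingletonClass Ω] (σ : Ω) :
    (PMF.uniformOfFintype Ω).toMeasure.real {σ} = (Fintype.card Ω : ℝ)⁻¹ := by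
  simp [measureReal_def, PMF.toMeasure_apply_singleton _ _ (measurableSet_singleton σ)]

lemma ofReal_one_sub_le_uniformOfFintype_compl [Nonempty Ω] [MeasurableSpace Ω]
    [DiscreteMeasurableSpace Ω] (s : Finset Ω) {r : ℝ} (hs : (#s : ℝ) ≤ r * Fintype.card Ω) :
    ENNReal.ofReal (1 - r) ≤ (PMF.uniformOfFintype Ω).toMeasure (↑s)ᶜ := by
  rw [ENNReal.ofReal_le_iff_le_toReal (measure_ne_top _ _), ← measureReal_def,
    probReal_compl_eq_one_sub MeasurableSet.of_discrete, ← sum_measureReal_singleton]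
  simp only [measureReal_uniformOfFintype_singleton, sum_const, nsmul_eq_mul]
  have hN : (0 : ℝ) < Fintype.card Ω := by exact_mod_cast Fintype.card_pos
  linarith [(div_le_iff₀ hN).2 hs, div_eq_mul_inv (#s : ℝ) (Fintype.card Ω)]

variable {β : Type*} [MeasurableSpace β] [MeasurableSingletonClass β] {π : Ω → β}

lemma measurable_comap_of_fiber_const {γ : Type*} [MeasurableSpace γ] {g : Ω → γ}
    (hg : ∀ σ τ, π σ = π τ → g σ = g τ) :
    Measurable[MeasurableSpace.comap π ‹_›] g := by
  intro S _
  refine ⟨π '' (g ⁻¹' S), (Set.toFinite _).measurableSet, ?_⟩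
  ext σ
  constructor
  · rintro ⟨τ, hτ, hτσ⟩
    simpa [hg σ τ hτσ.symm] using hτ
  · exact fun hσ => ⟨σ, hσ, rfl⟩

theorem condExp_comap_eq_fiberAvg [Nonempty Ω] [MeasurableSpace Ω] [DiscreteMeasurableSpace Ω]
    (F : Ω → ℝ) :
    (PMF.uniformOfFintype Ω).toMeasure[F | MeasurableSpace.comap π ‹_›] = fiberAvg π F := by
  set μ := (PMF.uniformOfFintype Ω).toMeasure
  have hle : MeasurableSpace.comap π ‹_› ≤ ‹MeasurableSpace Ω› :=
    fun _ _ => MeasurableSet.of_discrete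
  have hsum : ∀ s : Set Ω, MeasurableSet[MeasurableSpace.comap π ‹_›] s →
      ∫ σ in s, fiberAvg π F σ ∂μ = ∫ σ in s, F σ ∂μ := by
    rintro _ ⟨B, -, rfl⟩
    classical
    have hs : π ⁻¹' B = ↑({σ | π σ ∈ B} : Finset Ω) := by ext; simp
    simp only [hs, setIntegral_finset _ Integrable.of_finite.integrableOn, μ,
      measureReal_uniformOfFintype_singleton, smul_eq_mul, ← Finset.mul_sum]
    rw [sum_fiberAvg_of_saturated F fun σ hσ τ hτ => by simpa [hτ] using hσ]
  have hae := ae_eq_condExp_of_forall_setIntegral_eq (μ := μ) hle (f := F)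
    Integrable.of_finite (fun _ _ _ => Integrable.of_finite.integrableOn) (fun s hs _ => hsum s hs)
    (measurable_comap_of_fiber_const fun σ τ h => fiberAvg_eq_of_eq F h).aestronglyMeasurable
  funext σ
  refine ((ae_iff_of_countable.1 hae) σ ?_).symm
  simp [μ, PMF.toMeasure_apply_singleton _ _ (measurableSet_singleton σ)]

end UniformMeasure

section Maximal

variable {Ω : Type*} [Fintype Ω] {β : ℕ → Type*}

/-- Doob's maximal inequality for the submartingale `Φ ∘ R j`: the event is split according to
the first index `j` with `a < R j σ`, and that part of it is a union of fibers of `π j`. -/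
theorem card_exists_lt_mul_le_sum (π : ∀ j, Ω → β j) (R : ℕ → Ω → ℝ) (J : ℕ)
    (hπ : ∀ k j, k ≤ j → j ≤ J → ∀ σ τ, π j σ = π j τ → π k σ = π k τ)
    (hR : ∀ j ≤ J, fiberAvg (π j) (R J) = R j)
    {Φ : ℝ → ℝ} (hΦ : ConvexOn ℝ Set.univ Φ) (hΦm : Monotone Φ) (a : ℝ) :
    #{σ | ∃ j ≤ J, a < R j σ} * Φ a ≤ ∑ σ ∈ {σ | ∃ j ≤ J, a < R j σ}, Φ (R J σ) := by
  classical
  set T : ℕ → Finset Ω := fun j => {σ | a < R j σ ∧ ∀ k < j, R k σ ≤ a}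
  have hcover : ({σ | ∃ j ≤ J, a < R j σ} : Finset Ω) = (range (J + 1)).biUnion T := by
    ext σ
    simp only [mem_filter, mem_univ, true_and, mem_biUnion, mem_range, T]
    constructor
    · intro hex
      refine ⟨Nat.find hex, Nat.lt_succ_of_le (Nat.find_spec hex).1, (Nat.find_spec hex).2,
        fun k hk => ?_⟩
      exact not_lt.1 fun hlt =>
        Nat.find_min hex hk ⟨(hk.trans_le (Nat.find_spec hex).1).le, hlt⟩
    · rintro ⟨j, hj, hlt, -⟩
      exact ⟨j, Nat.le_of_lt_succ hj, hlt⟩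
  have hdisj : (↑(range (J + 1)) : Set ℕ).PairwiseDisjoint T := by
    intro j₁ _ j₂ _ hne
    refine Finset.disjoint_left.2 fun σ h₁ h₂ => ?_
    simp only [mem_filter, mem_univ, true_and, T] at h₁ h₂
    rcases lt_or_gt_of_ne hne with h | h
    · exact (h₁.1.trans_le (h₂.2 j₁ h)).false
    · exact (h₂.1.trans_le (h₁.2 j₂ h)).false
  have hsat : ∀ j ≤ J, ∀ σ ∈ T j, ∀ τ, π j τ = π j σ → τ ∈ T j := by
    intro j hj σ hσ τ hτ
    have hRk : ∀ k ≤ j, R k τ = R k σ := fun k hk => by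
      rw [← hR k (hk.trans hj), fiberAvg_eq_of_eq (R J) (hπ k j hk hj τ σ hτ)]
    simp only [mem_filter, mem_univ, true_and, T] at hσ ⊢
    exact ⟨hRk j le_rfl ▸ hσ.1, fun k hk => hRk k hk.le ▸ hσ.2 k hk⟩
  have hstep : ∀ j ∈ range (J + 1), ∑ σ ∈ T j, Φ a ≤ ∑ σ ∈ T j, Φ (R J σ) := by
    intro j hj
    have hj : j ≤ J := Nat.le_of_lt_succ (mem_range.1 hj)
    calc ∑ σ ∈ T j, Φ a ≤ ∑ σ ∈ T j, Φ (fiberAvg (π j) (R J) σ) := by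
          refine Finset.sum_le_sum fun σ hσ => hΦm ?_
          rw [hR j hj]
          exact (mem_filter.1 hσ).2.1.le
      _ ≤ ∑ σ ∈ T j, fiberAvg (π j) (Φ ∘ R J) σ :=
          Finset.sum_le_sum fun σ _ => hΦ.map_fiberAvg_le _ σ
      _ = ∑ σ ∈ T j, Φ (R J σ) := sum_fiberAvg_of_saturated _ (hsat j hj)
  rw [← nsmul_eq_mul, ← Finset.sum_const, hcover, Finset.sum_biUnion hdisj,
    Finset.sum_biUnion hdisj]
  exact Finset.sum_le_sum hstep

end Maximal

section Remaining

variable {m : ℕ}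

def remaining (m j : ℕ) : Finset (Fin m) := {p | j ≤ (p : ℕ)}

@[simp]
lemma mem_remaining {j : ℕ} {p : Fin m} : p ∈ remaining m j ↔ j ≤ (p : ℕ) := by
  simp [remaining]

lemma sum_castLE_add_sum_remaining {M : Type*} [AddCommMonoid M] {j : ℕ} (hj : j ≤ m)
    (g : Fin m → M) :
    ∑ k : Fin j, g (Fin.castLE hj k) + ∑ p ∈ remaining m j, g p = ∑ p, g p := by
  rw [← Finset.sum_filter_add_sum_filter_not univ (fun p : Fin m => (p : ℕ) < j)]
  congr 1
  · have hhead : ({p | (p : ℕ) < j} : Finset (Fin m)) = univ.map (Fin.castLEEmb hj) := by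
      ext p
      simp only [mem_map, mem_univ, true_and, Fin.castLEEmb_apply, mem_filter]
      exact ⟨fun hp => ⟨⟨p, hp⟩, rfl⟩, fun ⟨k, hk⟩ => hk ▸ k.isLt⟩
    rw [hhead, Finset.sum_map]
    rfl
  · congr 1
    ext p
    simp

lemma card_remaining {j : ℕ} (hj : j ≤ m) : (#(remaining m j) : ℝ) = m - j := by
  have h := sum_castLE_add_sum_remaining hj (fun _ => (1 : ℝ))
  simp only [sum_const, card_univ, Fintype.card_fin, nsmul_eq_mul, mul_one] at h
  linarith

noncomputable def remainingAvg (x : Fin m → ℝ) (j : ℕ) (σ : Equiv.Perm (Fin m)) : ℝ :=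
  (∑ p ∈ remaining m j, x (σ p)) / ((m : ℝ) - j)

variable {α : Type*} (y : Fin m → α)

def prefixObs (j : ℕ) (hj : j ≤ m) (σ : Equiv.Perm (Fin m)) : Fin j → α :=
  fun t => y (σ (Fin.castLE hj t))

lemma prefixObs_eq_of_le {k j : ℕ} (hkj : k ≤ j) (hj : j ≤ m) {σ τ : Equiv.Perm (Fin m)}
    (h : prefixObs y j hj σ = prefixObs y j hj τ) :
    prefixObs y k (hkj.trans hj) σ = prefixObs y k (hkj.trans hj) τ :=
  funext fun t => congrFun h (Fin.castLE hkj t)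

lemma prefixObs_mul_swap {j : ℕ} (hj : j ≤ m) {p q : Fin m} (hp : j ≤ (p : ℕ))
    (hq : j ≤ (q : ℕ)) (σ : Equiv.Perm (Fin m)) :
    prefixObs y j hj (σ * Equiv.swap p q) = prefixObs y j hj σ := by
  funext t
  have ht : (Fin.castLE hj t : ℕ) < j := t.isLt
  rw [prefixObs, prefixObs, Equiv.Perm.mul_apply, Equiv.swap_apply_of_ne_of_ne
    (Fin.ne_of_val_ne (by omega)) (Fin.ne_of_val_ne (by omega))]

lemma remainingAvg_eq_of_prefixObs_eq (g : α → ℝ) {j : ℕ} (hj : j ≤ m)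
    {σ τ : Equiv.Perm (Fin m)} (h : prefixObs y j hj σ = prefixObs y j hj τ) :
    remainingAvg (fun t => g (y t)) j σ = remainingAvg (fun t => g (y t)) j τ := by
  have hsum : ∀ σ : Equiv.Perm (Fin m), ∑ p ∈ remaining m j, g (y (σ p))
      = ∑ t, g (y t) - ∑ k, g (prefixObs y j hj σ k) := fun σ => by
    rw [← Equiv.sum_comp σ (fun t => g (y t)), ← sum_castLE_add_sum_remaining hj]
    simp [prefixObs]
  simp only [remainingAvg, hsum, h]

lemma sum_fiber_prefixObs_apply_eq (x : Fin m → ℝ) {j : ℕ} (hj : j ≤ m) {p q : Fin m}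
    (hp : j ≤ (p : ℕ)) (hq : j ≤ (q : ℕ)) (σ : Equiv.Perm (Fin m)) :
    ∑ τ ∈ fiber (prefixObs y j hj) σ, x (τ p) = ∑ τ ∈ fiber (prefixObs y j hj) σ, x (τ q) :=
  Finset.sum_equiv (Equiv.mulRight (Equiv.swap p q))
    (by simp [prefixObs_mul_swap y hj hp hq]) (by simp)

lemma sum_fiber_prefixObs_remainingAvg (x : Fin m → ℝ) {j k : ℕ} (hj : j ≤ m) (hjk : j ≤ k)
    (hk : k < m) {p : Fin m} (hp : j ≤ (p : ℕ)) (σ : Equiv.Perm (Fin m)) :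
    ∑ τ ∈ fiber (prefixObs y j hj) σ, remainingAvg x k τ
      = ∑ τ ∈ fiber (prefixObs y j hj) σ, x (τ p) := by
  have hmk : (m : ℝ) - k ≠ 0 := by
    have : (k : ℝ) < m := by exact_mod_cast hk
    linarith
  simp only [remainingAvg, ← Finset.sum_div]
  rw [Finset.sum_comm, Finset.sum_congr rfl fun q hq => sum_fiber_prefixObs_apply_eq y x hj
    (hjk.trans (mem_remaining.1 hq)) hp σ, Finset.sum_const, nsmul_eq_mul,
    card_remaining hk.le, mul_div_cancel_left₀ _ hmk]

lemma fiberAvg_prefixObs_apply (g : α → ℝ) {j : ℕ} (hj : j ≤ m) {p : Fin m}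
    (hp : j ≤ (p : ℕ)) (σ : Equiv.Perm (Fin m)) :
    fiberAvg (prefixObs y j hj) (fun τ => g (y (τ p))) σ
      = remainingAvg (fun t => g (y t)) j σ := by
  rw [fiberAvg, ← sum_fiber_prefixObs_remainingAvg y (fun t => g (y t)) hj le_rfl
    (hp.trans_lt p.isLt) hp, ← fiberAvg,
    fiberAvg_of_fiber_const fun τ hτ => remainingAvg_eq_of_prefixObs_eq y g hj hτ]

lemma fiberAvg_prefixObs_remainingAvg (g : α → ℝ) {j J : ℕ} (hjJ : j ≤ J) (hJ : J < m)
    (σ : Equiv.Perm (Fin m)) :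
    fiberAvg (prefixObs y j (hjJ.trans hJ.le)) (remainingAvg (fun t => g (y t)) J) σ
      = remainingAvg (fun t => g (y t)) j σ := by
  rw [fiberAvg, sum_fiber_prefixObs_remainingAvg y _ _ hjJ hJ (p := ⟨J, hJ⟩) hjJ,
    ← fiberAvg, fiberAvg_prefixObs_apply y g _ hjJ]

end Remaining

section Sampling

variable {m : ℕ} (a : Fin m → ℝ)

lemma prod_mul_swap_apply {S : Finset (Fin m)} {q t : Fin m} (hq : q ∉ S) (ht : t ∉ S)
    (σ : Equiv.Perm (Fin m)) :
    ∏ p ∈ S, a ((σ * Equiv.swap q t) p) = ∏ p ∈ S, a (σ p) :=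
  Finset.prod_congr rfl fun p hp => by
    rw [Equiv.Perm.mul_apply, Equiv.swap_apply_of_ne_of_ne (ne_of_mem_of_not_mem hp hq)
      (ne_of_mem_of_not_mem hp ht)]

lemma sum_perm_mul_prod_eq_of_notMem (f : Fin m → ℝ) {S : Finset (Fin m)} {q t : Fin m}
    (hq : q ∉ S) (ht : t ∉ S) :
    ∑ σ : Equiv.Perm (Fin m), f (σ q) * ∏ p ∈ S, a (σ p)
      = ∑ σ : Equiv.Perm (Fin m), f (σ t) * ∏ p ∈ S, a (σ p) :=
  Fintype.sum_equiv (Equiv.mulRight (Equiv.swap q t)) _ _ fun σ => by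
    rw [Equiv.coe_mulRight, prod_mul_swap_apply a hq ht, Equiv.Perm.mul_apply,
      Equiv.swap_apply_right]

/-- Swapping `q` and `t` shows `∑ a(σq)² Q = ∑ a(σt)² Q`, so the difference of the two sides
is `½ ∑ (a(σq) - a(σt))² Q ≥ 0`, where `Q` is the product over `S \ {q}`. -/
lemma sum_perm_mul_prod_le_of_mem (ha : ∀ u, 0 ≤ a u) {S : Finset (Fin m)} {q t : Fin m}
    (hq : q ∈ S) (ht : t ∉ S) :
    ∑ σ : Equiv.Perm (Fin m), a (σ t) * ∏ p ∈ S, a (σ p)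
      ≤ ∑ σ : Equiv.Perm (Fin m), a (σ q) * ∏ p ∈ S, a (σ p) := by
  set Q : Equiv.Perm (Fin m) → ℝ := fun σ => ∏ p ∈ S.erase q, a (σ p)
  have hsplit : ∀ σ : Equiv.Perm (Fin m), ∏ p ∈ S, a (σ p) = a (σ q) * Q σ :=
    fun σ => (Finset.mul_prod_erase S _ hq).symm
  have hswap := sum_perm_mul_prod_eq_of_notMem a (fun u => a u ^ 2) (notMem_erase q S)
    (fun h => ht (mem_of_mem_erase h))
  have hsq : 0 ≤ ∑ σ : Equiv.Perm (Fin m), (a (σ q) - a (σ t)) ^ 2 * Q σ :=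
    Finset.sum_nonneg fun σ _ => mul_nonneg (sq_nonneg _) (Finset.prod_nonneg fun p _ => ha _)
  have hexpand : ∑ σ : Equiv.Perm (Fin m), (a (σ q) - a (σ t)) ^ 2 * Q σ
      = ∑ σ : Equiv.Perm (Fin m), a (σ q) ^ 2 * Q σ
        + ∑ σ : Equiv.Perm (Fin m), a (σ t) ^ 2 * Q σ
        - 2 * ∑ σ : Equiv.Perm (Fin m), a (σ t) * (a (σ q) * Q σ) := by
    rw [← Finset.sum_add_distrib, Finset.mul_sum, ← Finset.sum_sub_distrib]
    exact Finset.sum_congr rfl fun σ _ => by ring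
  simp only [hsplit]
  have hsq' : ∑ σ : Equiv.Perm (Fin m), a (σ q) * (a (σ q) * Q σ)
      = ∑ σ : Equiv.Perm (Fin m), a (σ q) ^ 2 * Q σ :=
    Finset.sum_congr rfl fun σ _ => by ring
  linarith

lemma mul_sum_perm_mul_prod_le (ha : ∀ u, 0 ≤ a u) {S : Finset (Fin m)} {t : Fin m}
    (ht : t ∉ S) :
    m * ∑ σ : Equiv.Perm (Fin m), a (σ t) * ∏ p ∈ S, a (σ p)
      ≤ (∑ u, a u) * ∑ σ : Equiv.Perm (Fin m), ∏ p ∈ S, a (σ p) := by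
  calc (m : ℝ) * ∑ σ : Equiv.Perm (Fin m), a (σ t) * ∏ p ∈ S, a (σ p)
      = ∑ _q : Fin m, ∑ σ : Equiv.Perm (Fin m), a (σ t) * ∏ p ∈ S, a (σ p) := by simp
    _ ≤ ∑ q : Fin m, ∑ σ : Equiv.Perm (Fin m), a (σ q) * ∏ p ∈ S, a (σ p) := by
        refine Finset.sum_le_sum fun q _ => ?_
        by_cases hq : q ∈ S
        · exact sum_perm_mul_prod_le_of_mem a ha hq ht
        · exact (sum_perm_mul_prod_eq_of_notMem a a hq ht).ge
    _ = (∑ u, a u) * ∑ σ : Equiv.Perm (Fin m), ∏ p ∈ S, a (σ p) := by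
        rw [Finset.sum_comm, Finset.mul_sum]
        refine Finset.sum_congr rfl fun σ _ => ?_
        rw [← Finset.sum_mul, Equiv.sum_comp σ a]

theorem sum_perm_prod_le (ha : ∀ u, 0 ≤ a u) (S : Finset (Fin m)) :
    ∑ σ : Equiv.Perm (Fin m), ∏ p ∈ S, a (σ p)
      ≤ ((∑ u, a u) / m) ^ #S * Fintype.card (Equiv.Perm (Fin m)) := by
  induction S using Finset.induction_on with
  | empty => simp
  | insert t S ht ih =>
    have hm : (0 : ℝ) < m := by exact_mod_cast t.pos
    have hstep := mul_sum_perm_mul_prod_le a ha ht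
    have hmean : 0 ≤ (∑ u, a u) / m := div_nonneg (Finset.sum_nonneg fun u _ => ha u) hm.le
    simp only [Finset.prod_insert ht, card_insert_of_notMem ht, pow_succ]
    calc ∑ σ : Equiv.Perm (Fin m), a (σ t) * ∏ p ∈ S, a (σ p)
        ≤ (∑ u, a u) / m * ∑ σ : Equiv.Perm (Fin m), ∏ p ∈ S, a (σ p) := by
          rw [div_mul_eq_mul_div, le_div_iff₀ hm]
          linarith
      _ ≤ (∑ u, a u) / m * (((∑ u, a u) / m) ^ #S * Fintype.card (Equiv.Perm (Fin m))) :=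
          mul_le_mul_of_nonneg_left ih hmean
      _ = _ := by ring

lemma exp_mul_le_one_add (l : ℝ) {x : ℝ} (hx : x ∈ Set.Icc (0 : ℝ) 1) :
    Real.exp (l * x) ≤ 1 + (Real.exp l - 1) * x := by
  have h := convexOn_exp.2 (Set.mem_univ 0) (Set.mem_univ l) (sub_nonneg.2 hx.2) hx.1
    (sub_add_cancel 1 x)
  simp only [smul_eq_mul, mul_zero, zero_add, Real.exp_zero] at h
  rw [mul_comm x l] at h
  linarith

theorem sum_perm_exp_sum_le (x : Fin m → ℝ) (hx : ∀ t, x t ∈ Set.Icc (0 : ℝ) 1) (l : ℝ)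
    (S : Finset (Fin m)) :
    ∑ σ : Equiv.Perm (Fin m), Real.exp (l * ∑ p ∈ S, x (σ p))
      ≤ Real.exp ((Real.exp l - 1) * ((1 / m) * ∑ t, x t) * #S)
        * Fintype.card (Equiv.Perm (Fin m)) := by
  rcases Nat.eq_zero_or_pos m with rfl | hm
  · obtain rfl : S = ∅ := Finset.eq_empty_of_isEmpty S
    simp
  have hm' : (0 : ℝ) < m := by exact_mod_cast hm
  have hmean : (∑ u, Real.exp (l * x u)) / m
      ≤ Real.exp ((Real.exp l - 1) * ((1 / m) * ∑ t, x t)) := by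
    calc (∑ u, Real.exp (l * x u)) / m ≤ (∑ u, (1 + (Real.exp l - 1) * x u)) / m :=
          div_le_div_of_nonneg_right
            (Finset.sum_le_sum fun u _ => exp_mul_le_one_add l (hx u)) hm'.le
      _ = 1 + (Real.exp l - 1) * ((1 / m) * ∑ t, x t) := by
          rw [Finset.sum_add_distrib, ← Finset.mul_sum]
          field_simp
          simp
      _ ≤ _ := by linarith [Real.add_one_le_exp ((Real.exp l - 1) * ((1 / m) * ∑ t, x t))]
  calc ∑ σ : Equiv.Perm (Fin m), Real.exp (l * ∑ p ∈ S, x (σ p))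
      = ∑ σ : Equiv.Perm (Fin m), ∏ p ∈ S, Real.exp (l * x (σ p)) := by
        simp only [Finset.mul_sum, Real.exp_sum]
    _ ≤ ((∑ u, Real.exp (l * x u)) / m) ^ #S * Fintype.card (Equiv.Perm (Fin m)) :=
        sum_perm_prod_le (fun u => Real.exp (l * x u)) (fun u => (Real.exp_pos _).le) S
    _ ≤ Real.exp ((Real.exp l - 1) * ((1 / m) * ∑ t, x t)) ^ #S
          * Fintype.card (Equiv.Perm (Fin m)) :=
        mul_le_mul_of_nonneg_right (pow_le_pow_left₀ (by positivity) hmean _) (by positivity)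
    _ = _ := by rw [← Real.exp_nat_mul, mul_comm (#S : ℝ)]

end Sampling

instance (m : ℕ) : DiscreteMeasurableSpace (Equiv.Perm (Fin m)) := ⟨fun _ => trivial⟩

section Concentration

variable {m : ℕ} {α : Type*} (y : Fin m → α) (g : α → ℝ)

theorem condExp_prefixObs_eq_remainingAvg [MeasurableSpace α] [MeasurableSingletonClass α]
    (j : Fin m) :
    (permUniform m)[fun σ => g (y (σ j)) |
        MeasurableSpace.comap (prefixObs y j j.isLt.le) inferInstance]
      = remainingAvg (fun t => g (y t)) j := by
  rw [permUniform, condExp_comap_eq_fiberAvg]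
  exact funext (fiberAvg_prefixObs_apply y g _ le_rfl)

theorem card_exists_lt_remainingAvg_mul_le (hg : ∀ t, g (y t) ∈ Set.Icc (0 : ℝ) 1) {J : ℕ}
    (hJ : J < m) {l : ℝ} (hl : 0 ≤ l) (a : ℝ) :
    #{σ | ∃ j ≤ J, a < remainingAvg (fun t => g (y t)) j σ} * Real.exp (l * (m - J) * a)
      ≤ Real.exp ((Real.exp l - 1) * ((1 / m) * ∑ t, g (y t)) * (m - J))
        * Fintype.card (Equiv.Perm (Fin m)) := by
  have hK : (0 : ℝ) < m - J := sub_pos.2 (by exact_mod_cast hJ)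
  have hc : 0 ≤ l * (m - J) := mul_nonneg hl hK.le
  calc _ ≤ ∑ σ ∈ {σ | ∃ j ≤ J, a < remainingAvg (fun t => g (y t)) j σ},
          Real.exp (l * (m - J) * remainingAvg (fun t => g (y t)) J σ) :=
        card_exists_lt_mul_le_sum (fun j => prefixObs y (min j m) (min_le_right j m))
          (remainingAvg fun t => g (y t)) J (Φ := fun r => Real.exp (l * (m - J) * r))
          (fun k j hkj _ _ _ h => prefixObs_eq_of_le y (min_le_min_right m hkj) _ h)
          (fun j hj => funext fun σ => by
            rw [fiberAvg_prefixObs_remainingAvg y g (min_le_of_left_le hj) hJ,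
              min_eq_left (hj.trans hJ.le)])
          (convexOn_exp.comp_linearMap (LinearMap.mulLeft ℝ (l * (m - J))))
          (Real.exp_monotone.comp (monotone_mul_left_of_nonneg hc)) a
    _ ≤ ∑ σ : Equiv.Perm (Fin m),
          Real.exp (l * (m - J) * remainingAvg (fun t => g (y t)) J σ) :=
        Finset.sum_le_sum_of_subset_of_nonneg (subset_univ _) fun _ _ _ => (Real.exp_pos _).le
    _ = ∑ σ : Equiv.Perm (Fin m), Real.exp (l * ∑ p ∈ remaining m J, g (y (σ p))) := by
        simp only [remainingAvg, mul_assoc, mul_div_cancel₀ _ hK.ne']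
    _ ≤ _ := by
        simpa only [card_remaining hJ.le] using
          sum_perm_exp_sum_le (fun t => g (y t)) hg l (remaining m J)

theorem card_exists_lt_remainingAvg_le (hg : ∀ t, g (y t) ∈ Set.Icc (0 : ℝ) 1) {J : ℕ}
    (hJ : J < m) (hmJ : m ≤ 2 * (m - J)) {ε ℓ : ℝ} (hε : ε ∈ Set.Ioc (0 : ℝ) 1) (hℓ : 0 ≤ ℓ) :
    (#{σ | ∃ j ≤ J, (1 + 2 * ε) * ((1 / m) * ∑ t, g (y t)) + 2 * ℓ / (m * ε)
        < remainingAvg (fun t => g (y t)) j σ} : ℝ)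
      ≤ Real.exp (-ℓ) * Fintype.card (Equiv.Perm (Fin m)) := by
  set μ := (1 / m : ℝ) * ∑ t, g (y t)
  set a := (1 + 2 * ε) * μ + 2 * ℓ / (m * ε)
  have hm : (0 : ℝ) < m := by exact_mod_cast (Nat.zero_le J).trans_lt hJ
  have hK : (m : ℝ) ≤ 2 * (m - J) := by
    have : ((m : ℕ) : ℝ) ≤ ((2 * (m - J) : ℕ) : ℝ) := by exact_mod_cast hmJ
    rwa [Nat.cast_mul, Nat.cast_sub hJ.le, Nat.cast_two] at this
  have hμ : 0 ≤ μ := mul_nonneg (by positivity) (Finset.sum_nonneg fun t _ => (hg t).1)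
  have hexp : Real.exp ε - 1 ≤ ε * (1 + 2 * ε) := by
    have h := (abs_le.1 (Real.abs_exp_sub_one_sub_id_le
      (abs_le.2 ⟨by linarith [hε.1], hε.2⟩))).2
    nlinarith [hε.1]
  have hexponent : (Real.exp ε - 1) * μ * (m - J) - ε * (m - J) * a ≤ -ℓ := by
    have h1 : ε * (m - J) * (2 * ℓ / (m * ε)) = 2 * (m - J) * ℓ / m := by
      field_simp [hε.1.ne']
    have h2 : ℓ ≤ 2 * (m - J) * ℓ / m := by
      rw [le_div_iff₀ hm]
      nlinarith
    have h3 : (Real.exp ε - 1) * μ * (m - J) ≤ ε * (1 + 2 * ε) * μ * (m - J) :=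
      mul_le_mul_of_nonneg_right (mul_le_mul_of_nonneg_right hexp hμ) (by linarith)
    have h4 : ε * (m - J) * a
        = ε * (1 + 2 * ε) * μ * (m - J) + ε * (m - J) * (2 * ℓ / (m * ε)) := by
      ring
    linarith
  have h := card_exists_lt_remainingAvg_mul_le y g hg hJ hε.1.le a
  calc _ ≤ Real.exp ((Real.exp ε - 1) * μ * (m - J) - ε * (m - J) * a)
        * Fintype.card (Equiv.Perm (Fin m)) := by
        rw [Real.exp_sub, div_mul_eq_mul_div, le_div_iff₀ (Real.exp_pos _)]
        exact h
    _ ≤ _ := mul_le_mul_of_nonneg_right (Real.exp_le_exp.2 hexponent) (by positivity)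

end Concentration

end RandomOrder

open RandomOrder

/-- For vectors `y₁,…,y_m ∈ [0,1]^d` presented in uniformly random order
(`Y_j := y_{σ(j)}`, 0-indexed) and a fixed coordinate `i`, with probability at least
`1 − δ/d` one has, simultaneously for all `j` with `j+1 ≤ m/2` (1-indexed `j ≤ m/2`):
`E[Y_j,i | Y_0,…,Y_{j−1}] ≤ (1+2ε)·μ_i + C·log(d/δ)/(m·ε)`. -/
theorem condexp_remaining_average_bound :
    ∃ C : ℝ, 0 < C ∧
      ∀ (m d : ℕ), 0 < m → 0 < d →
      ∀ (y : Fin m → Fin d → ℝ), (∀ t i', y t i' ∈ Set.Icc (0 : ℝ) 1) →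
      ∀ (i : Fin d) (ε δ : ℝ), ε ∈ Set.Ioc (0 : ℝ) 1 → δ ∈ Set.Ioc (0 : ℝ) 1 →
      ENNReal.ofReal (1 - δ / d) ≤
        permUniform m {σ | ∀ j : Fin m, 2 * ((j : ℕ) + 1) ≤ m →
          ((permUniform m)[(fun σ' => y (σ' j) i)|MeasurableSpace.comap
              (fun σ' : Equiv.Perm (Fin m) =>
                fun t : Fin (j : ℕ) => y (σ' (Fin.castLE j.isLt.le t)))
              inferInstance]) σ
            ≤ (1 + 2 * ε) * ((1 / m) * ∑ t, y t i) + C * Real.log (d / δ) / (m * ε)} := by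
  refine ⟨2, two_pos, fun m d hm hd y hy i ε δ hε hδ => ?_⟩
  have hcond : ∀ j : Fin m, (permUniform m)[(fun σ' => y (σ' j) i)|MeasurableSpace.comap
      (fun σ' : Equiv.Perm (Fin m) => fun t : Fin (j : ℕ) => y (σ' (Fin.castLE j.isLt.le t)))
      inferInstance] = remainingAvg (fun t => y t i) j :=
    condExp_prefixObs_eq_remainingAvg y (fun v => v i)
  simp only [hcond]
  have hℓ : 0 ≤ Real.log (d / δ) :=
    Real.log_nonneg ((one_le_div hδ.1).2 (hδ.2.trans (by exact_mod_cast hd)))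
  have hbad := card_exists_lt_remainingAvg_le y (fun v => v i) (fun t => hy t i)
    (J := m / 2 - 1) (by omega) (by omega) hε hℓ
  rw [Real.exp_neg, Real.exp_log (div_pos (by exact_mod_cast hd) hδ.1), inv_div] at hbad
  refine (ofReal_one_sub_le_uniformOfFintype_compl _ hbad).trans
    (measure_mono fun σ hσ j hj => not_lt.1 fun hlt => hσ ?_)
  exact Finset.mem_coe.2 (mem_filter.2 ⟨mem_univ σ, j, by omega, hlt⟩)
end

section
/- Let (Ω, F, (F_j)_{j=0,…,k}, P) be a filtered probability space, and let W_1,…,W_k be random variables with W_j being F_j-measurable and 0 ≤ W_j ≤ 1 almost surely for each j. Let τ be a stopping time with respect to (F_j) with τ ≤ k almost surely. Then for every ε ∈ (0,1/2] and every λ ≥ 0: Pr( Σ_{j≤τ} ( (1−ε)·W_j − E[W_j | F_{j−1}] ) > λ ) ≤ e^{−ελ}. -/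
/-!
Put `X_j = 1{j ≤ τ} ((1 - ε) W_j - E[W_j | F_{j-1}])`; almost surely the stopped sum is
`∑_{j ≤ k} X_j`. Each `X_j` is `F_j`-measurable with `|X_j| ≤ 1`, and because `W_j ^ 2 ≤ W_j`
it has negative drift: `E[X_j | F_{j-1}] ≤ -ε E[X_j ^ 2 | F_{j-1}]` for `ε ≤ 1/2`. Together with
`exp x ≤ 1 + x + x ^ 2` on `[-1, 1]` this gives `E[exp (ε X_j) | F_{j-1}] ≤ 1`, so by the tower
property `E[exp (ε ∑ X_j)] ≤ 1`, and the Chernoff bound concludes.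
-/

open MeasureTheory

section

variable {Ω : Type*} {m m0 : MeasurableSpace Ω} {P : Measure Ω}

theorem abs_one_sub_mul_sub_le_one {ε v ν : ℝ} (hε0 : 0 ≤ ε) (hε1 : ε ≤ 1)
    (hv : v ∈ Set.Icc 0 1) (hν : ν ∈ Set.Icc 0 1) : |(1 - ε) * v - ν| ≤ 1 := by
  have h0 : 0 ≤ (1 - ε) * v := mul_nonneg (by linarith) hv.1
  have h1 : (1 - ε) * v ≤ 1 := mul_le_one₀ (by linarith) hv.1 hv.2
  rw [abs_le]
  constructor <;> linarith [hν.1, hν.2]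

theorem Finset.sum_Icc_one_eq_sum_Icc_one_ite {M : Type*} [AddCommMonoid M] (f : ℕ → M)
    {t k : ℕ} (htk : t ≤ k) :
    ∑ j ∈ Finset.Icc 1 t, f j = ∑ j ∈ Finset.Icc 1 k, if j - 1 < t then f j else 0 := by
  rw [← Finset.sum_filter]
  congr 1
  ext j
  simp only [Finset.mem_Icc, Finset.mem_filter]
  omega

theorem MeasureTheory.IsStoppingTime.measurableSet_gt_natCast {𝓕 : Filtration ℕ m0}
    {τ : Ω → ℕ} (hτ : IsStoppingTime 𝓕 fun ω => (τ ω : WithTop ℕ)) (i : ℕ) :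
    MeasurableSet[𝓕 i] {ω | i < τ ω} := by
  convert hτ.measurableSet_gt i using 3
  exact WithTop.coe_lt_coe.symm

theorem integrable_sq_of_ae_abs_le_one [IsFiniteMeasure P] {X : Ω → ℝ}
    (hX : AEStronglyMeasurable X P) (hX1 : ∀ᵐ ω ∂P, |X ω| ≤ 1) : Integrable (X ^ 2) P :=
  .of_bound (hX.pow 2) 1 <| hX1.mono fun ω h => by
    rwa [Pi.pow_apply, norm_pow, Real.norm_eq_abs,
      pow_le_one_iff_of_nonneg (abs_nonneg _) two_ne_zero]

theorem ae_condExp_mem_Icc_zero_one [IsFiniteMeasure P] (hm : m ≤ m0) {V : Ω → ℝ}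
    (hV : AEStronglyMeasurable V P) (hV01 : ∀ᵐ ω ∂P, V ω ∈ Set.Icc 0 1) :
    ∀ᵐ ω ∂P, P[V|m] ω ∈ Set.Icc 0 1 := by
  have hle := condExp_mono (m := m) (Integrable.of_mem_Icc 0 1 hV.aemeasurable hV01)
    (integrable_const 1) (hV01.mono fun ω h => h.2)
  rw [condExp_const hm] at hle
  filter_upwards [condExp_nonneg (m := m) (hV01.mono fun ω h => h.1), hle] with ω h0 h1
  exact ⟨h0, h1⟩

theorem ae_abs_indicator_smul_sub_condExp_le_one [IsFiniteMeasure P] (hm : m ≤ m0)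
    {V : Ω → ℝ} (hV : AEStronglyMeasurable V P) (hV01 : ∀ᵐ ω ∂P, V ω ∈ Set.Icc 0 1) {ε : ℝ}
    (hε0 : 0 ≤ ε) (hε1 : ε ≤ 1) (A : Set Ω) :
    ∀ᵐ ω ∂P, |A.indicator ((1 - ε) • V - P[V|m]) ω| ≤ 1 := by
  filter_upwards [hV01, ae_condExp_mem_Icc_zero_one hm hV hV01] with ω hv hν
  have hind : ‖A.indicator ((1 - ε) • V - P[V|m]) ω‖ ≤ ‖((1 - ε) • V - P[V|m]) ω‖ :=
    norm_indicator_le_norm_self _ _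
  rw [Real.norm_eq_abs, Real.norm_eq_abs] at hind
  exact hind.trans (abs_one_sub_mul_sub_le_one hε0 hε1 hv hν)

theorem stronglyMeasurable_indicator_smul_sub_condExp {m' : MeasurableSpace Ω} (hmm' : m ≤ m')
    {V : Ω → ℝ} (hV : StronglyMeasurable[m'] V) {A : Set Ω} (hA : MeasurableSet[m] A)
    (ε : ℝ) : StronglyMeasurable[m'] (A.indicator ((1 - ε) • V - P[V|m])) :=
  ((hV.const_smul _).sub (stronglyMeasurable_condExp.mono hmm')).indicator (hmm' _ hA)

def HasDrift (P : Measure Ω) (m : MeasurableSpace Ω) (ε : ℝ) (X : Ω → ℝ) : Prop :=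
  P[X|m] ≤ᵐ[P] -(ε • P[X ^ 2|m])

theorem hasDrift_smul_sub_condExp [IsFiniteMeasure P] (hm : m ≤ m0) {V : Ω → ℝ}
    (hV : AEStronglyMeasurable V P) (hV01 : ∀ᵐ ω ∂P, V ω ∈ Set.Icc 0 1) {ε : ℝ}
    (hε0 : 0 ≤ ε) (hε : ε ≤ 1 / 2) : HasDrift P m ε ((1 - ε) • V - P[V|m]) := by
  have hVi : Integrable V P := .of_mem_Icc 0 1 hV.aemeasurable hV01
  have hνi : Integrable P[V|m] P := integrable_condExp
  have hνsm : StronglyMeasurable[m] P[V|m] := stronglyMeasurable_condExp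
  have hν01 := ae_condExp_mem_Icc_zero_one hm hV hV01
  have hX2i : Integrable (((1 - ε) • V - P[V|m]) ^ 2) P := by
    refine integrable_sq_of_ae_abs_le_one ((hVi.smul (1 - ε)).sub hνi).aestronglyMeasurable ?_
    simpa using ae_abs_indicator_smul_sub_condExp_le_one hm hV hV01 hε0 (by linarith) Set.univ
  -- `V ^ 2 ≤ V` bounds the square by a function whose conditional expectation is explicit
  set a : Ω → ℝ := fun ω => (1 - ε) ^ 2 - 2 * (1 - ε) * P[V|m] ω
  have hasm : StronglyMeasurable[m] a := stronglyMeasurable_const.sub (hνsm.const_mul _)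
  have haVi : Integrable (a * V) P :=
    ((integrable_const _).sub (hνi.const_mul _)).mul_bdd hVi.aestronglyMeasurable (c := 1) <|
      hV01.mono fun ω h => by rw [Real.norm_eq_abs, abs_le]; exact ⟨by linarith [h.1], h.2⟩
  have hν2i : Integrable (P[V|m] ^ 2) P :=
    integrable_sq_of_ae_abs_le_one hνi.aestronglyMeasurable <|
      hν01.mono fun ω h => by rw [abs_le]; exact ⟨by linarith [h.1], h.2⟩
  have hsq : ((1 - ε) • V - P[V|m]) ^ 2 ≤ᵐ[P] a * V + P[V|m] ^ 2 := by
    filter_upwards [hV01] with ω hV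
    simp only [a, Pi.pow_apply, Pi.sub_apply, Pi.smul_apply, Pi.mul_apply, Pi.add_apply,
      smul_eq_mul]
    nlinarith [mul_nonneg (sq_nonneg (1 - ε))
      (sub_nonneg.2 (pow_le_of_le_one hV.1 hV.2 two_ne_zero))]
  have hνν : P[P[V|m]|m] = P[V|m] := condExp_of_stronglyMeasurable hm hνsm hνi
  have hν2 : P[P[V|m] ^ 2|m] = P[V|m] ^ 2 :=
    condExp_of_stronglyMeasurable hm (hνsm.pow 2) hν2i
  filter_upwards [condExp_sub (hVi.smul (1 - ε)) hνi m, condExp_smul (1 - ε) V m,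
    condExp_mono hX2i (haVi.add hν2i) hsq, condExp_add haVi hν2i m,
    condExp_mul_of_stronglyMeasurable_left hasm haVi hVi, hν01] with ω h1 h2 h3 h4 h5 hν
  simp only [Pi.sub_apply, Pi.smul_apply, Pi.add_apply, Pi.mul_apply, Pi.neg_apply,
    smul_eq_mul] at h1 h2 h3 h4 h5 ⊢
  rw [h4, h5, hν2] at h3
  rw [h1, h2, hνν]
  simp only [a, Pi.pow_apply] at h3
  -- with `ν = P[V|m] ω`, the slack in the goal is `ε ^ 2 (2 - ε) ν + ε (1 - 2 ε) ν ^ 2 ≥ 0`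
  have hε2 : 0 ≤ 1 - 2 * ε := by linarith
  nlinarith [mul_le_mul_of_nonneg_left h3 hε0,
    mul_nonneg (mul_nonneg (sq_nonneg ε) (by linarith : (0 : ℝ) ≤ 2 - ε)) hν.1,
    mul_nonneg (mul_nonneg hε0 hε2) (sq_nonneg (P[V|m] ω))]

theorem HasDrift.indicator {A : Set Ω} (hA : MeasurableSet[m] A) {X : Ω → ℝ} {ε : ℝ}
    (hXi : Integrable X P) (hX2i : Integrable (X ^ 2) P) (hX : HasDrift P m ε X) :
    HasDrift P m ε (A.indicator X) := by
  have hsq : (A.indicator X) ^ 2 = A.indicator (X ^ 2) := by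
    ext ω
    by_cases hω : ω ∈ A <;> simp [hω]
  rw [HasDrift, hsq]
  filter_upwards [condExp_indicator hXi hA, condExp_indicator hX2i hA, hX] with ω h1 h2 h3
  rw [Pi.neg_apply, Pi.smul_apply, h1, h2]
  by_cases hω : ω ∈ A <;> simp_all

theorem HasDrift.condExp_exp_le_one [IsFiniteMeasure P] (hm : m ≤ m0) {X : Ω → ℝ}
    (hX : AEStronglyMeasurable X P) (hX1 : ∀ᵐ ω ∂P, |X ω| ≤ 1) {ε : ℝ} (hε0 : 0 ≤ ε)
    (hε1 : ε ≤ 1) (hdrift : HasDrift P m ε X) :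
    P[fun ω => Real.exp (ε * X ω)|m] ≤ᵐ[P] 1 := by
  have hXi : Integrable X P := .of_bound hX 1 hX1
  have hX2i : Integrable (X ^ 2) P := integrable_sq_of_ae_abs_le_one hX hX1
  have hexpi : Integrable (fun ω => Real.exp (ε * X ω)) P :=
    .of_bound (Real.continuous_exp.comp_aestronglyMeasurable (hX.const_mul ε)) (Real.exp 1) <|
      hX1.mono fun ω h => by
        rw [Real.norm_eq_abs, abs_of_pos (Real.exp_pos _), Real.exp_le_exp]
        nlinarith [abs_le.1 h]
  have hquadi : Integrable ((fun _ => 1) + ε • X + ε ^ 2 • X ^ 2) P :=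
    ((integrable_const 1).add (hXi.smul ε)).add (hX2i.smul (ε ^ 2))
  have hquad : (fun ω => Real.exp (ε * X ω)) ≤ᵐ[P] (fun _ => 1) + ε • X + ε ^ 2 • X ^ 2 :=
    hX1.mono fun ω h => by
      have hεX : |ε * X ω| ≤ 1 := by
        rw [abs_mul, abs_of_nonneg hε0]
        exact mul_le_one₀ hε1 (abs_nonneg _) h
      have := (abs_le.1 (Real.abs_exp_sub_one_sub_id_le hεX)).2
      simp only [Pi.add_apply, Pi.smul_apply, Pi.pow_apply, smul_eq_mul]
      linarith [mul_pow ε (X ω) 2]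
  filter_upwards [condExp_mono (m := m) hexpi hquadi hquad,
    condExp_add ((integrable_const 1).add (hXi.smul ε)) (hX2i.smul (ε ^ 2)) m,
    condExp_add (integrable_const 1) (hXi.smul ε) m, condExp_smul ε X m,
    condExp_smul (ε ^ 2) (X ^ 2) m, hdrift] with ω h1 h2 h3 h4 h5 h6
  simp only [Pi.add_apply, Pi.smul_apply, Pi.neg_apply, smul_eq_mul, Pi.one_apply]
    at h1 h2 h3 h4 h5 h6 ⊢
  rw [h2, h3, h4, h5, condExp_const hm] at h1
  nlinarith [mul_le_mul_of_nonneg_left h6 hε0]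

theorem condExp_exp_indicator_smul_sub_condExp_le_one [IsFiniteMeasure P] (hm : m ≤ m0)
    {V : Ω → ℝ} (hV : AEStronglyMeasurable V P) (hV01 : ∀ᵐ ω ∂P, V ω ∈ Set.Icc 0 1)
    {A : Set Ω} (hA : MeasurableSet[m] A) {ε : ℝ} (hε0 : 0 ≤ ε) (hε : ε ≤ 1 / 2) :
    P[fun ω => Real.exp (ε * A.indicator ((1 - ε) • V - P[V|m]) ω)|m] ≤ᵐ[P] 1 := by
  have hXm : AEStronglyMeasurable ((1 - ε) • V - P[V|m]) P :=
    (hV.const_smul _).sub (stronglyMeasurable_condExp.mono hm).aestronglyMeasurable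
  have hX1 := ae_abs_indicator_smul_sub_condExp_le_one hm hV hV01 hε0 (by linarith)
  have hX1' : ∀ᵐ ω ∂P, |((1 - ε) • V - P[V|m]) ω| ≤ 1 := by simpa using hX1 Set.univ
  refine HasDrift.condExp_exp_le_one hm (hXm.indicator (hm A hA)) (hX1 A) hε0 (by linarith) ?_
  exact (hasDrift_smul_sub_condExp hm hV hV01 hε0 hε).indicator hA (.of_bound hXm 1 hX1')
    (integrable_sq_of_ae_abs_le_one hXm hX1')

theorem integrable_prod_of_ae_norm_le [IsFiniteMeasure P] {ι : Type*} (s : Finset ι)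
    {Z : ι → Ω → ℝ} {C : ℝ} (hZ : ∀ j ∈ s, AEStronglyMeasurable (Z j) P)
    (hZC : ∀ j ∈ s, ∀ᵐ ω ∂P, ‖Z j ω‖ ≤ C) :
    Integrable (fun ω => ∏ j ∈ s, Z j ω) P := by
  refine .of_bound (Finset.aestronglyMeasurable_fun_prod s hZ) (∏ _j ∈ s, C) ?_
  filter_upwards [(Filter.eventually_all_finset s).2 hZC] with ω hω
  rw [norm_prod]
  exact Finset.prod_le_prod (fun j _ => norm_nonneg _) hω

theorem integral_prod_le_one_of_condExp_le_one [IsProbabilityMeasure P]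
    {𝓕 : Filtration ℕ m0} {Z : ℕ → Ω → ℝ} {C : ℝ} (n : ℕ)
    (hZ : ∀ j ∈ Finset.Icc 1 n, StronglyMeasurable[𝓕 j] (Z j))
    (hZ0 : ∀ j ∈ Finset.Icc 1 n, 0 ≤ᵐ[P] Z j)
    (hZC : ∀ j ∈ Finset.Icc 1 n, ∀ᵐ ω ∂P, ‖Z j ω‖ ≤ C)
    (hstep : ∀ j ∈ Finset.Icc 1 n, P[Z j|𝓕 (j - 1)] ≤ᵐ[P] 1) :
    ∫ ω, ∏ j ∈ Finset.Icc 1 n, Z j ω ∂P ≤ 1 := by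
  induction n with
  | zero => simp
  | succ n ih =>
    have hsub : Finset.Icc 1 n ⊆ Finset.Icc 1 (n + 1) := Finset.Icc_subset_Icc_right n.le_succ
    have hlast : n + 1 ∈ Finset.Icc 1 (n + 1) := by simp
    have hsplit := Finset.prod_Icc_succ_top (Nat.le_add_left 1 n) (M := ℝ)
    set F : Ω → ℝ := fun ω => ∏ j ∈ Finset.Icc 1 n, Z j ω
    have hFsm : StronglyMeasurable[𝓕 n] F := Finset.stronglyMeasurable_fun_prod _
      fun j hj => (hZ j (hsub hj)).mono (𝓕.mono (Finset.mem_Icc.1 hj).2)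
    have hZm : ∀ j ∈ Finset.Icc 1 (n + 1), AEStronglyMeasurable (Z j) P := fun j hj =>
      ((hZ j hj).mono (𝓕.le j)).aestronglyMeasurable
    have hFi : Integrable F P := integrable_prod_of_ae_norm_le _
      (fun j hj => hZm j (hsub hj)) (fun j hj => hZC j (hsub hj))
    have hFZi : Integrable (F * Z (n + 1)) P := by
      have := integrable_prod_of_ae_norm_le _ hZm hZC
      simp only [hsplit] at this
      exact this
    have hZi : Integrable (Z (n + 1)) P := .of_bound (hZm _ hlast) C (hZC _ hlast)
    have hF0 : 0 ≤ᵐ[P] F := by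
      filter_upwards [(Filter.eventually_all_finset _).2 fun j hj => hZ0 j (hsub hj)] with ω hω
      exact Finset.prod_nonneg hω
    have hpull := condExp_mul_of_stronglyMeasurable_left hFsm hFZi hZi
    have hstep' : P[Z (n + 1)|𝓕 n] ≤ᵐ[P] 1 := by simpa using hstep _ hlast
    calc ∫ ω, ∏ j ∈ Finset.Icc 1 (n + 1), Z j ω ∂P = ∫ ω, (F * Z (n + 1)) ω ∂P := by
          simp only [hsplit, F, Pi.mul_apply]
      _ = ∫ ω, P[F * Z (n + 1)|𝓕 n] ω ∂P := (integral_condExp (𝓕.le n)).symm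
      _ = ∫ ω, (F * P[Z (n + 1)|𝓕 n]) ω ∂P := integral_congr_ae hpull
      _ ≤ ∫ ω, F ω ∂P := by
          refine integral_mono_ae (integrable_condExp.congr hpull) hFi ?_
          filter_upwards [hstep', hF0] with ω h1 h0
          exact mul_le_of_le_one_right h0 h1
      _ ≤ 1 := ih (fun j hj => hZ j (hsub hj)) (fun j hj => hZ0 j (hsub hj))
          (fun j hj => hZC j (hsub hj)) (fun j hj => hstep j (hsub hj))

theorem ae_norm_exp_mul_le {X : Ω → ℝ} {C : ℝ} (hX : ∀ᵐ ω ∂P, |X ω| ≤ C) (t : ℝ) :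
    ∀ᵐ ω ∂P, ‖Real.exp (t * X ω)‖ ≤ Real.exp (|t| * C) :=
  hX.mono fun ω h => by
    rw [Real.norm_eq_abs, abs_of_pos (Real.exp_pos _), Real.exp_le_exp]
    exact (le_abs_self _).trans (abs_mul t (X ω) ▸ mul_le_mul_of_nonneg_left h (abs_nonneg t))

theorem integrable_exp_mul_sum [IsFiniteMeasure P] {ι : Type*} (s : Finset ι)
    {X : ι → Ω → ℝ} {C : ℝ} (hX : ∀ j ∈ s, AEStronglyMeasurable (X j) P)
    (hXC : ∀ j ∈ s, ∀ᵐ ω ∂P, |X j ω| ≤ C) (t : ℝ) :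
    Integrable (fun ω => Real.exp (t * ∑ j ∈ s, X j ω)) P := by
  simp_rw [Finset.mul_sum, Real.exp_sum]
  exact integrable_prod_of_ae_norm_le s
    (fun j hj => Real.continuous_exp.comp_aestronglyMeasurable ((hX j hj).const_mul t))
    fun j hj => ae_norm_exp_mul_le (hXC j hj) t

theorem integral_exp_mul_sum_le_one [IsProbabilityMeasure P] {𝓕 : Filtration ℕ m0}
    {X : ℕ → Ω → ℝ} {C t : ℝ} (n : ℕ)
    (hX : ∀ j ∈ Finset.Icc 1 n, StronglyMeasurable[𝓕 j] (X j))
    (hXC : ∀ j ∈ Finset.Icc 1 n, ∀ᵐ ω ∂P, |X j ω| ≤ C)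
    (hstep : ∀ j ∈ Finset.Icc 1 n, P[fun ω => Real.exp (t * X j ω)|𝓕 (j - 1)] ≤ᵐ[P] 1) :
    ∫ ω, Real.exp (t * ∑ j ∈ Finset.Icc 1 n, X j ω) ∂P ≤ 1 := by
  simp_rw [Finset.mul_sum, Real.exp_sum]
  exact integral_prod_le_one_of_condExp_le_one n
    (fun j hj => Real.continuous_exp.comp_stronglyMeasurable ((hX j hj).const_mul t))
    (fun j _ => ae_of_all _ fun ω => (Real.exp_pos _).le)
    (fun j hj => ae_norm_exp_mul_le (hXC j hj) t) hstep

theorem measure_lt_le_exp_of_integral_exp_le_one [IsFiniteMeasure P] {S : Ω → ℝ} {t : ℝ}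
    (ht : 0 ≤ t) (hint : Integrable (fun ω => Real.exp (t * S ω)) P)
    (hle : ∫ ω, Real.exp (t * S ω) ∂P ≤ 1) (lam : ℝ) :
    P {ω | lam < S ω} ≤ ENNReal.ofReal (Real.exp (-(t * lam))) := by
  have hchernoff := ProbabilityTheory.measure_ge_le_exp_mul_mgf lam ht hint
  calc P {ω | lam < S ω} ≤ P {ω | lam ≤ S ω} := measure_mono fun ω h => le_of_lt (α := ℝ) h
    _ = ENNReal.ofReal (P.real {ω | lam ≤ S ω}) := (ofReal_measureReal).symm
    _ ≤ ENNReal.ofReal (Real.exp (-(t * lam))) := by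
        refine ENNReal.ofReal_le_ofReal (hchernoff.trans ?_)
        rw [neg_mul]
        exact mul_le_of_le_one_right (Real.exp_pos _).le hle

end

theorem adapted_drift_concentration_general
    {Ω : Type*} {m0 : MeasurableSpace Ω} (P : Measure Ω) [IsProbabilityMeasure P]
    (k : ℕ) (𝓕 : Filtration ℕ m0) (W : ℕ → Ω → ℝ)
    (hadapt : ∀ j, 1 ≤ j → j ≤ k → Measurable[𝓕 j] (W j))
    (hbdd : ∀ j, 1 ≤ j → j ≤ k → ∀ᵐ ω ∂P, W j ω ∈ Set.Icc (0 : ℝ) 1)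
    (τ : Ω → ℕ) (hτ : IsStoppingTime 𝓕 (fun ω => (τ ω : WithTop ℕ))) (hτk : ∀ᵐ ω ∂P, τ ω ≤ k)
    (ε lam : ℝ) (hε : ε ∈ Set.Ioc (0 : ℝ) (1 / 2)) :
    P {ω | lam <
        ∑ j ∈ Finset.Icc 1 (τ ω), ((1 - ε) * W j ω - (P[W j|𝓕 (j - 1)]) ω)}
      ≤ ENNReal.ofReal (Real.exp (-(ε * lam))) := by
  obtain ⟨hε0, hε⟩ := hε
  have hW : ∀ j ∈ Finset.Icc 1 k,
      StronglyMeasurable[𝓕 j] (W j) ∧ ∀ᵐ ω ∂P, W j ω ∈ Set.Icc 0 1 := fun j hj => by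
    obtain ⟨h1, h2⟩ := Finset.mem_Icc.1 hj
    exact ⟨(hadapt j h1 h2).stronglyMeasurable, hbdd j h1 h2⟩
  have hWm : ∀ j ∈ Finset.Icc 1 k, AEStronglyMeasurable (W j) P := fun j hj =>
    ((hW j hj).1.mono (𝓕.le j)).aestronglyMeasurable
  set X : ℕ → Ω → ℝ := fun j => {ω | j - 1 < τ ω}.indicator ((1 - ε) • W j - P[W j|𝓕 (j - 1)])
  have hA : ∀ j, MeasurableSet[𝓕 (j - 1)] {ω | j - 1 < τ ω} := fun j =>
    hτ.measurableSet_gt_natCast (j - 1)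
  have hX : ∀ j ∈ Finset.Icc 1 k, StronglyMeasurable[𝓕 j] (X j) := fun j hj =>
    stronglyMeasurable_indicator_smul_sub_condExp (𝓕.mono (j.sub_le 1)) (hW j hj).1 (hA j) ε
  have hX1 : ∀ j ∈ Finset.Icc 1 k, ∀ᵐ ω ∂P, |X j ω| ≤ 1 := fun j hj =>
    ae_abs_indicator_smul_sub_condExp_le_one (𝓕.le _) (hWm j hj) (hW j hj).2 hε0.le
      (by linarith) _
  have hstep : ∀ j ∈ Finset.Icc 1 k, P[fun ω => Real.exp (ε * X j ω)|𝓕 (j - 1)] ≤ᵐ[P] 1 :=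
    fun j hj => condExp_exp_indicator_smul_sub_condExp_le_one (𝓕.le _) (hWm j hj) (hW j hj).2
      (hA j) hε0.le hε
  have hsum : ∀ᵐ ω ∂P, ∑ j ∈ Finset.Icc 1 (τ ω), ((1 - ε) * W j ω - (P[W j|𝓕 (j - 1)]) ω)
      = ∑ j ∈ Finset.Icc 1 k, X j ω := hτk.mono fun ω hω => by
    simp only [X, Set.indicator_apply, Set.mem_ofPred_eq]
    exact Finset.sum_Icc_one_eq_sum_Icc_one_ite _ hω
  calc _ = P {ω | lam < ∑ j ∈ Finset.Icc 1 k, X j ω} :=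
        measure_congr <| Filter.eventuallyEq_set.2 <| hsum.mono fun ω hω => by
          simp only [Set.mem_ofPred_eq, hω]
    _ ≤ _ := measure_lt_le_exp_of_integral_exp_le_one hε0.le
        (integrable_exp_mul_sum _ (fun j hj => ((hX j hj).mono (𝓕.le j)).aestronglyMeasurable)
          hX1 ε)
        (integral_exp_mul_sum_le_one k hX hX1 hstep) lam

/-- Exponential tail bound for adapted `[0,1]`-valued variables up to a
bounded stopping time: for `ε ∈ (0,1/2]` and `λ ≥ 0`,
`Pr( Σ_{j≤τ} ((1−ε)·W_j − E[W_j | F_{j−1}]) > λ ) ≤ exp(−ελ)`. -/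
theorem adapted_drift_concentration
    {Ω : Type*} {m0 : MeasurableSpace Ω} (P : Measure Ω) [IsProbabilityMeasure P]
    (k : ℕ) (𝓕 : Filtration ℕ m0) (W : ℕ → Ω → ℝ)
    (hadapt : ∀ j, 1 ≤ j → j ≤ k → Measurable[𝓕 j] (W j))
    (hbdd : ∀ j, 1 ≤ j → j ≤ k → ∀ᵐ ω ∂P, W j ω ∈ Set.Icc (0 : ℝ) 1)
    (τ : Ω → ℕ) (hτ : IsStoppingTime 𝓕 (fun ω => (τ ω : WithTop ℕ))) (hτk : ∀ᵐ ω ∂P, τ ω ≤ k)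
    (ε lam : ℝ) (hε : ε ∈ Set.Ioc (0 : ℝ) (1 / 2)) (hlam : 0 ≤ lam) :
    P {ω | lam <
        ∑ j ∈ Finset.Icc 1 (τ ω), ((1 - ε) * W j ω - (P[W j|𝓕 (j - 1)]) ω)}
      ≤ ENNReal.ofReal (Real.exp (-(ε * lam))) :=
  adapted_drift_concentration_general P k 𝓕 W hadapt hbdd τ hτ hτk ε lam hε
end

section
/- Let ((a_1, D_1),…,(a_n, D_n), B) be a base prophet instance: a_t ∈ [0,1]^d, B > 0, and V_1,…,V_n independent nonnegative integrable random variables with V_t distributed according to D_t, where each D_t is atomless. Let OPT_base := E[ max{ Σ_t V_t x_t : x ∈ {0,1}^n, Σ_t a_t x_t ≤ B·1 } ]. Then there exist measurable functions ψ_1,…,ψ_n from ℝ≥0 to {0,1} such that: (1) E[ Σ_t V_t·ψ_t(V_t) ] ≥ OPT_base/4, and (2) Σ_t a_t·E[ψ_t(V_t)] ≤ (B/4)·1 coordinatewise. -/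
/-!
Let `F ω` be a measurable maximizer of the offline problem and `A t` the event that it takes
item `t`. Then `E[OPT] = ∑ t E[V_t; A t]`, and `p t = P(A t)` satisfies the budget constraints
because every `F ω` does. If `p t > 0`, atomlessness of `D t` gives a threshold `τ` with
`P(V_t ≥ τ) = p t / 4`. By the bathtub principle `{V_t ≥ τ}` maximizes `E[V_t - τ; E]` over all
events `E`, so `E[V_t; A t] ≤ E[V_t; V_t ≥ τ] + (3/4) τ p t ≤ 4 E[V_t; V_t ≥ τ]`.
-/

open MeasureTheory Set Finset ProbabilityTheory

namespace ProbabilityTheory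

lemma continuous_cdf (μ : Measure ℝ) [IsProbabilityMeasure μ] [NullSingletonClass μ] :
    Continuous (cdf μ) := by
  refine continuous_iff_continuousAt.2 fun x => ?_
  rw [(monotone_cdf μ).continuousAt_iff_leftLim_eq_rightLim, (cdf μ).rightLim_eq]
  have hjump := (cdf μ).measure_singleton x
  rw [measure_cdf, measure_singleton, eq_comm, ENNReal.ofReal_eq_zero] at hjump
  linarith [(monotone_cdf μ).leftLim_le (le_refl x)]

lemma exists_measureReal_Ici_eq (μ : Measure ℝ) [IsProbabilityMeasure μ] [NullSingletonClass μ]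
    {q : ℝ} (hq₀ : 0 < q) (hq₁ : q < 1) : ∃ τ, μ.real (Ici τ) = q := by
  have hIci : ∀ τ, μ.real (Ici τ) = 1 - cdf μ τ := fun τ => by
    rw [cdf_eq_real, ← probReal_compl_eq_one_sub measurableSet_Iic, compl_Iic,
      measureReal_congr Ioi_ae_eq_Ici.symm]
  obtain ⟨τ, hτ⟩ : 1 - q ∈ range (cdf μ) :=
    mem_range_of_exists_le_of_exists_ge (continuous_cdf μ)
      ((tendsto_cdf_atBot μ).eventually (ge_mem_nhds (by linarith))).exists
      ((tendsto_cdf_atTop μ).eventually (le_mem_nhds (by linarith))).exists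
  exact ⟨τ, by rw [hIci, hτ]; ring⟩

end ProbabilityTheory

lemma Measurable.decide_le {Ω : Type*} [MeasurableSpace Ω] {f g : Ω → ℝ}
    (hf : Measurable f) (hg : Measurable g) : Measurable fun ω => decide (f ω ≤ g ω) :=
  measurable_to_bool <| by convert measurableSet_le hf hg using 1; ext; simp

namespace MeasureTheory

variable {Ω : Type*} [MeasurableSpace Ω] {ν : Measure Ω}

lemma integral_ite_one_zero {p : Ω → Bool} (hp : MeasurableSet {ω | p ω}) :
    ∫ ω, (if p ω then (1 : ℝ) else 0) ∂ν = ν.real {ω | p ω} := by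
  rw [← integral_indicator_one hp]
  congr with ω
  simp [indicator_apply]

lemma integral_mul_ite_one_zero {V : Ω → ℝ} {p : Ω → Bool} (hp : MeasurableSet {ω | p ω}) :
    ∫ ω, V ω * (if p ω then 1 else 0) ∂ν = ∫ ω in {ω | p ω}, V ω ∂ν := by
  rw [← integral_indicator hp]
  congr with ω
  simp [indicator_apply]

lemma Integrable.mul_ite_one_zero {V : Ω → ℝ} (hV : Integrable V ν) {p : Ω → Bool}
    (hp : MeasurableSet {ω | p ω}) : Integrable (fun ω => V ω * if p ω then 1 else 0) ν :=
  (hV.indicator hp).congr (ae_of_all _ fun ω => by simp [indicator_apply])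

lemma exists_measurable_argmax {α : Type*} [Finite α] [MeasurableSpace α] {P : α → Prop}
    (hP : ∃ x, P x) {f : α → Ω → ℝ} (hf : ∀ x, Measurable (f x)) :
    ∃ F : Ω → α, Measurable F ∧ ∀ ω, P (F ω) ∧ ∀ y, P y → f y ω ≤ f (F ω) ω := by
  -- the maximizer is chosen as a function of the finite table of comparisons `f y ω ≤ f z ω`
  have hG : ∀ c : α → α → Bool, ∃ x, (∃ x, P x ∧ ∀ y, P y → c y x) → P x ∧ ∀ y, P y → c y x := by
    intro c
    by_cases h : ∃ x, P x ∧ ∀ y, P y → c y x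
    · obtain ⟨x, hx⟩ := h
      exact ⟨x, fun _ => hx⟩
    · exact ⟨hP.choose, fun h' => absurd h' h⟩
  choose G hG using hG
  let cmp : Ω → α → α → Bool := fun ω y z => decide (f y ω ≤ f z ω)
  have hcmp : Measurable cmp :=
    measurable_pi_lambda _ fun y => measurable_pi_lambda _ fun z => (hf y).decide_le (hf z)
  refine ⟨fun ω => G (cmp ω), (measurable_of_countable G).comp hcmp, fun ω => ?_⟩
  obtain ⟨x, hxP, hx⟩ := Set.exists_max_image {x | P x} (fun x => f x ω) (Set.toFinite _) hP
  simpa [cmp] using hG (cmp ω) ⟨x, hxP, by simpa [cmp] using hx⟩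

lemma integral_sum_mul_ite_one_zero {ι : Type*} [Fintype ι] {V : ι → Ω → ℝ}
    (hV : ∀ t, Integrable (V t) ν) {F : Ω → ι → Bool} (hF : ∀ t, MeasurableSet {ω | F ω t}) :
    ∫ ω, ∑ t, V t ω * (if F ω t then 1 else 0) ∂ν = ∑ t, ∫ ω in {ω | F ω t}, V t ω ∂ν := by
  rw [integral_finsetSum _ fun t _ => (hV t).mul_ite_one_zero (hF t)]
  simp_rw [integral_mul_ite_one_zero (hF _)]

lemma sum_mul_measureReal_le [IsProbabilityMeasure ν] {ι : Type*} [Fintype ι] {F : Ω → ι → Bool}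
    (hF : ∀ t, MeasurableSet {ω | F ω t}) (w : ι → ℝ) {B : ℝ}
    (hB : ∀ ω, ∑ t, w t * (if F ω t then 1 else 0) ≤ B) :
    ∑ t, w t * ν.real {ω | F ω t} ≤ B := by
  have hint : ∀ t, Integrable (fun ω => w t * (if F ω t then 1 else 0)) ν :=
    fun t => (integrable_const (w t)).mul_ite_one_zero (hF t)
  calc ∑ t, w t * ν.real {ω | F ω t}
      = ∫ ω, ∑ t, w t * (if F ω t then 1 else 0) ∂ν := by
        rw [integral_finsetSum _ fun t _ => hint t]
        simp_rw [integral_const_mul, integral_ite_one_zero (hF _)]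
    _ ≤ ∫ _, B ∂ν := integral_mono (integrable_finsetSum _ fun t _ => hint t) (integrable_const B) hB
    _ = B := by simp

variable {V : Ω → ℝ}

lemma setIntegral_le_mul_setIntegral_superlevel [IsFiniteMeasure ν] (hVm : Measurable V)
    (hV : Integrable V ν) {A : Set Ω} (hA : MeasurableSet A) {τ c : ℝ} (hc : 1 ≤ c)
    (hτ : ν.real A = c * ν.real {ω | τ ≤ V ω}) :
    ∫ ω in A, V ω ∂ν ≤ c * ∫ ω in {ω | τ ≤ V ω}, V ω ∂ν := by
  set S := {ω | τ ≤ V ω}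
  have hS : MeasurableSet S := measurableSet_le measurable_const hVm
  have hshift : ∀ s, ∫ ω in s, (V ω - τ) ∂ν = ∫ ω in s, V ω ∂ν - ν.real s * τ := fun s => by
    rw [integral_sub hV.integrableOn (integrableOn_const), setIntegral_const, smul_eq_mul]
  have hbathtub : ∫ ω in A, (V ω - τ) ∂ν ≤ ∫ ω in S, (V ω - τ) ∂ν := by
    simpa only [sub_nonneg] using setIntegral_le_nonneg (f := fun ω => V ω - τ) hA
      (hVm.sub measurable_const).stronglyMeasurable (hV.sub (integrable_const τ))
  have hS_nonneg : 0 ≤ ∫ ω in S, (V ω - τ) ∂ν :=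
    setIntegral_nonneg hS fun ω hω => sub_nonneg.2 hω
  rw [hshift, hshift, hτ] at hbathtub
  rw [hshift] at hS_nonneg
  nlinarith [mul_nonneg (sub_nonneg.2 hc) hS_nonneg]

lemma exists_threshold_policy [IsProbabilityMeasure ν] {μ : Measure ℝ} [NullSingletonClass μ]
    (hV : MeasurePreserving V ν μ) (hint : Integrable id μ) {A : Set Ω} (hA : MeasurableSet A)
    {c : ℝ} (hc : 1 < c) :
    ∃ ψ : ℝ → Bool, Measurable ψ ∧
      ∫ ω in A, V ω ∂ν ≤ c * ∫ ω in {ω | ψ (V ω)}, V ω ∂ν ∧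
      ν.real {ω | ψ (V ω)} = ν.real A / c := by
  have : IsProbabilityMeasure μ := hV.map_eq ▸ Measure.isProbabilityMeasure_map hV.aemeasurable
  rcases (measureReal_nonneg (μ := ν) (s := A)).eq_or_lt with hA0 | hApos
  · refine ⟨fun _ => false, measurable_const, ?_, by simp [← hA0]⟩
    rw [setIntegral_measure_zero _ ((measureReal_eq_zero_iff (measure_ne_top ν A)).1 hA0.symm)]
    simp
  obtain ⟨τ, hτ⟩ := exists_measureReal_Ici_eq μ (q := ν.real A / c) (by positivity)
    ((div_lt_one (by linarith)).2 (measureReal_le_one.trans_lt hc))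
  have hνS : ν.real {ω | τ ≤ V ω} = ν.real A / c := by
    rw [← hτ, ← hV.measureReal_preimage measurableSet_Ici.nullMeasurableSet]
    rfl
  refine ⟨fun v => decide (τ ≤ v), measurable_const.decide_le measurable_id, ?_, ?_⟩
  · simp only [decide_eq_true_eq]
    refine setIntegral_le_mul_setIntegral_superlevel hV.measurable
      (hV.integrable_comp_of_integrable hint) hA hc.le ?_
    rw [hνS]
    field_simp
  · simpa using hνS

end MeasureTheory

theorem prophet_surrogate_exists_general
    (n d : ℕ) (a : Fin n → Fin d → ℝ)
    (B : ℝ) (hB : 0 < B)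
    (D : Fin n → Measure ℝ)
    (hprob : ∀ t, IsProbabilityMeasure (D t))
    (hatomless : ∀ t, NoAtoms (D t))
    (hint : ∀ t, Integrable id (D t)) :
    ∃ ψ : Fin n → ℝ → Bool, (∀ t, Measurable (ψ t)) ∧
      (∫ ω, sSup {val : ℝ | ∃ x : Fin n → Bool,
            (∀ i, ∑ t, a t i * (if x t then (1 : ℝ) else 0) ≤ B) ∧
            val = ∑ t, ω t * (if x t then (1 : ℝ) else 0)} ∂(Measure.pi D)) / 4
          ≤ ∫ ω, ∑ t, ω t * (if ψ t (ω t) then (1 : ℝ) else 0) ∂(Measure.pi D) ∧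
      ∀ i, ∑ t, a t i * (∫ ω, (if ψ t (ω t) then (1 : ℝ) else 0) ∂(Measure.pi D)) ≤ B / 4 := by
  have : ∀ t, NullSingletonClass (D t) := hatomless
  obtain ⟨F, hFm, hF⟩ := exists_measurable_argmax
    (P := fun x : Fin n → Bool => ∀ i, ∑ t, a t i * (if x t then (1 : ℝ) else 0) ≤ B)
    ⟨fun _ => false, by simp [hB.le]⟩
    (f := fun x (ω : Fin n → ℝ) => ∑ t, ω t * (if x t then (1 : ℝ) else 0))
    fun x => Finset.measurable_sum _ fun t _ => (measurable_pi_apply t).mul_const _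
  have hOPT : ∀ ω, sSup {val : ℝ | ∃ x : Fin n → Bool,
      (∀ i, ∑ t, a t i * (if x t then (1 : ℝ) else 0) ≤ B) ∧
      val = ∑ t, ω t * (if x t then (1 : ℝ) else 0)} = ∑ t, ω t * (if F ω t then 1 else 0) :=
    fun ω => IsGreatest.csSup_eq ⟨⟨F ω, (hF ω).1, rfl⟩, by rintro _ ⟨x, hx, rfl⟩; exact (hF ω).2 x hx⟩
  have hA : ∀ t, MeasurableSet {ω | F ω t} :=
    fun t => (measurable_pi_apply t).comp hFm (measurableSet_singleton true)
  have hcoord : ∀ t, Integrable (fun ω : Fin n → ℝ => ω t) (Measure.pi D) :=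
    fun t => (measurePreserving_eval D t).integrable_comp_of_integrable (hint t)
  choose ψ hψm hψval hψfreq using fun t =>
    exists_threshold_policy (measurePreserving_eval D t) (hint t) (hA t) (by norm_num : (1 : ℝ) < 4)
  have hψA : ∀ t, MeasurableSet {ω : Fin n → ℝ | ψ t (ω t)} :=
    fun t => ((hψm t).comp (measurable_pi_apply t)) (measurableSet_singleton true)
  refine ⟨ψ, hψm, ?_, fun i => ?_⟩
  · rw [integral_congr_ae (ae_of_all _ hOPT), integral_sum_mul_ite_one_zero hcoord hA,
      integral_sum_mul_ite_one_zero hcoord hψA, div_le_iff₀ (by norm_num), sum_mul]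
    exact sum_le_sum fun t _ => by linarith [hψval t]
  · simp_rw [integral_ite_one_zero (hψA _), hψfreq, mul_div_assoc', ← sum_div]
    exact div_le_div_of_nonneg_right (sum_mul_measureReal_le hA (a · i) fun ω => (hF ω).1 i)
      (by norm_num)

/-- Existence of a surrogate single-item-threshold solution for a base
prophet instance: measurable policies `ψ_t : ℝ → {0,1}` whose expected value is at least
`OPT_base/4` while the expected utilization is at most `(B/4)·1`. -/
theorem prophet_surrogate_exists
    (n d : ℕ) (a : Fin n → Fin d → ℝ) (ha : ∀ t i, a t i ∈ Set.Icc (0 : ℝ) 1)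
    (B : ℝ) (hB : 0 < B)
    (D : Fin n → Measure ℝ)
    (hprob : ∀ t, IsProbabilityMeasure (D t))
    (hatomless : ∀ t, NoAtoms (D t))
    (hnonneg : ∀ t, D t (Set.Iio 0) = 0)
    (hint : ∀ t, Integrable id (D t)) :
    ∃ ψ : Fin n → ℝ → Bool, (∀ t, Measurable (ψ t)) ∧
      (∫ ω, sSup {val : ℝ | ∃ x : Fin n → Bool,
            (∀ i, ∑ t, a t i * (if x t then (1 : ℝ) else 0) ≤ B) ∧
            val = ∑ t, ω t * (if x t then (1 : ℝ) else 0)} ∂(Measure.pi D)) / 4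
          ≤ ∫ ω, ∑ t, ω t * (if ψ t (ω t) then (1 : ℝ) else 0) ∂(Measure.pi D) ∧
      ∀ i, ∑ t, a t i * (∫ ω, (if ψ t (ω t) then (1 : ℝ) else 0) ∂(Measure.pi D)) ≤ B / 4 :=
  prophet_surrogate_exists_general n d a B hB D hprob hatomless hint
end

section
/- Let V_1,…,V_n be independent nonnegative integrable random variables and let M ≥ 0. Let τ := min{ t : V_t > M } (with τ := ∞ if no such t exists) and let p := Pr(τ ≤ n). Then E[ V_τ · 1(τ ≤ n) ] ≥ (1−p) · Σ_{t=1}^n E[ V_t · 1(V_t > M) ]. -/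
/-!
The collected value is `∑ t, 1(τ ≥ t) · V_t · 1(V_t > M)`. The event `{τ ≥ t}`, written
`notStoppedBefore V M t` below, depends only on `V_s` for `s < t` and is therefore independent of
`V_t`; so the `t`-th term has expectation `E[V_t · 1(V_t > M)] · Pr(τ ≥ t)`, and
`Pr(τ ≥ t) ≥ Pr(τ = ∞) = 1 - p`.
-/

open MeasureTheory ProbabilityTheory

section

variable {Ω : Type*} [MeasurableSpace Ω] {P : Measure Ω}

lemma one_sub_measureReal_le_of_compl_subset [IsProbabilityMeasure P] {E A : Set Ω}
    (h : Eᶜ ⊆ A) : 1 - P.real E ≤ P.real A := by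
  have hunion := measureReal_union_le (μ := P) E A
  rw [Set.compl_subset_iff_union.mp h, probReal_univ] at hunion
  linarith

lemma ProbabilityTheory.IndepFun.integral_indicator_eq_mul_measureReal {X : Ω → ℝ} {A : Set Ω}
    (hXA : IndepFun X (A.indicator (1 : Ω → ℝ)) P) (hX : AEStronglyMeasurable X P)
    (hA : MeasurableSet A) :
    ∫ ω, A.indicator X ω ∂P = (∫ ω, X ω ∂P) * P.real A := by
  have hprod : A.indicator X = X * A.indicator 1 := by
    ext ω
    simpa using Set.indicator_mul_right A X 1 (i := ω)
  rw [hprod, hXA.integral_mul_eq_mul_integral hX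
    ((measurable_const.indicator hA).aestronglyMeasurable), integral_indicator_one hA]

end

section

variable {Ω ι : Type*} [Preorder ι] {V : ι → Ω → ℝ} {M : ℝ}

def notStoppedBefore (V : ι → Ω → ℝ) (M : ℝ) (t : ι) : Set Ω := {ω | ∀ s < t, V s ω ≤ M}

lemma compl_setOf_exists_lt_subset_notStoppedBefore (t : ι) :
    {ω | ∃ s, M < V s ω}ᶜ ⊆ notStoppedBefore V M t := by
  intro ω hω s _
  simp only [Set.mem_compl_iff, Set.mem_ofPred_eq, not_exists, not_lt] at hω
  exact hω s

variable [MeasurableSpace Ω] {P : Measure Ω}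

lemma measurableSet_notStoppedBefore [Countable ι] (hV : ∀ t, Measurable (V t)) (t : ι) :
    MeasurableSet (notStoppedBefore V M t) := by
  simp only [notStoppedBefore, Set.ofPred_forall]
  exact .iInter fun s => .iInter fun _ => measurableSet_le (hV s) measurable_const

lemma ProbabilityTheory.iIndepFun.indepFun_indicator_notStoppedBefore [Fintype ι]
    (hindep : iIndepFun V P) (hV : ∀ t, Measurable (V t)) (t : ι) :
    IndepFun (V t) ((notStoppedBefore V M t).indicator (1 : Ω → ℝ)) P := by
  classical
  let past : Finset ι := Finset.univ.filter (· < t)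
  have hdisj : Disjoint {t} past := by simp [past]
  have hpair := hindep.indepFun_finset {t} past hdisj hV
  have hφ : Measurable fun x : ({t} : Finset ι) → ℝ => x ⟨t, Finset.mem_singleton_self t⟩ :=
    measurable_pi_apply _
  have hψ : Measurable ({x : past → ℝ | ∀ s, x s ≤ M}.indicator (1 : (past → ℝ) → ℝ)) := by
    refine measurable_const.indicator ?_
    simp only [Set.ofPred_forall]
    exact .iInter fun s => measurableSet_le (measurable_pi_apply s) measurable_const
  have hpast : (notStoppedBefore V M t).indicator (1 : Ω → ℝ)
      = {x : past → ℝ | ∀ s, x s ≤ M}.indicator 1 ∘ fun ω (s : past) => V s ω := by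
    ext ω
    simp [Set.indicator_apply, notStoppedBefore, past]
  rw [hpast]
  exact hpair.comp hφ hψ

lemma ProbabilityTheory.iIndepFun.integral_indicator_notStoppedBefore_comp [Fintype ι]
    (hindep : iIndepFun V P) (hV : ∀ t, Measurable (V t)) {φ : ℝ → ℝ} (hφ : Measurable φ) (t : ι) :
    ∫ ω, (notStoppedBefore V M t).indicator (fun ω => φ (V t ω)) ω ∂P
      = (∫ ω, φ (V t ω) ∂P) * P.real (notStoppedBefore V M t) :=
  IndepFun.integral_indicator_eq_mul_measureReal
    ((hindep.indepFun_indicator_notStoppedBefore hV t).comp hφ measurable_id)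
    (hφ.comp (hV t)).aestronglyMeasurable (measurableSet_notStoppedBefore hV t)

end

theorem first_over_threshold_value_general
    {Ω : Type*} [MeasurableSpace Ω] (P : Measure Ω) [IsProbabilityMeasure P]
    (n : ℕ) (V : Fin n → Ω → ℝ)
    (hmeas : ∀ t, Measurable (V t))
    (hindep : iIndepFun V P)
    (hint : ∀ t, Integrable (V t) P)
    (M : ℝ) (hM : 0 ≤ M) :
    (1 - (P {ω | ∃ t, M < V t ω}).toReal) *
        ∑ t, ∫ ω, (if M < V t ω then V t ω else 0) ∂P
      ≤ ∫ ω, ∑ t, (if M < V t ω ∧ ∀ s, s < t → V s ω ≤ M then V t ω else 0) ∂P := by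
  let φ : ℝ → ℝ := {x | M < x}.indicator id
  have hφ : Measurable φ := measurable_id.indicator measurableSet_Ioi
  have hφ_nonneg : ∀ x, 0 ≤ φ x := Set.indicator_nonneg fun x hx => hM.trans hx.le
  have hφV : ∀ t, Integrable (fun ω => φ (V t ω)) P := fun t =>
    (hint t).indicator (measurableSet_lt measurable_const (hmeas t))
  calc (1 - P.real {ω | ∃ t, M < V t ω}) * ∑ t, ∫ ω, φ (V t ω) ∂P
      ≤ ∑ t, (∫ ω, φ (V t ω) ∂P) * P.real (notStoppedBefore V M t) := by
        rw [Finset.mul_sum]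
        refine Finset.sum_le_sum fun t _ => ?_
        rw [mul_comm]
        exact mul_le_mul_of_nonneg_left (one_sub_measureReal_le_of_compl_subset
          (compl_setOf_exists_lt_subset_notStoppedBefore t)) (integral_nonneg fun ω => hφ_nonneg _)
    _ = ∫ ω, ∑ t, (notStoppedBefore V M t).indicator (fun ω => φ (V t ω)) ω ∂P := by
        rw [integral_finsetSum _ fun t _ =>
          (hφV t).indicator (measurableSet_notStoppedBefore hmeas t)]
        simp_rw [hindep.integral_indicator_notStoppedBefore_comp hmeas hφ]
    _ = _ := by
        congr with ω
        refine Finset.sum_congr rfl fun t _ => ?_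
        simp only [φ, notStoppedBefore, Set.indicator_apply, Set.mem_ofPred_eq, id, ← ite_and,
          and_comm]

/-- For independent nonnegative integrable `V₁,…,Vₙ` and a threshold
`M ≥ 0`, let `τ` be the first index with `V_t > M` and `p := Pr(τ ≤ n)`. Then
`E[V_τ·1(τ ≤ n)] ≥ (1−p)·Σ_t E[V_t·1(V_t > M)]`. -/
theorem first_over_threshold_value
    {Ω : Type*} [MeasurableSpace Ω] (P : Measure Ω) [IsProbabilityMeasure P]
    (n : ℕ) (V : Fin n → Ω → ℝ)
    (hmeas : ∀ t, Measurable (V t))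
    (hindep : iIndepFun V P)
    (hnonneg : ∀ t, ∀ᵐ ω ∂P, 0 ≤ V t ω)
    (hint : ∀ t, Integrable (V t) P)
    (M : ℝ) (hM : 0 ≤ M) :
    (1 - (P {ω | ∃ t, M < V t ω}).toReal) *
        ∑ t, ∫ ω, (if M < V t ω then V t ω else 0) ∂P
      ≤ ∫ ω, ∑ t, (if M < V t ω ∧ ∀ s, s < t → V s ω ≤ M then V t ω else 0) ∂P :=
  first_over_threshold_value_general P n V hmeas hindep hint M hM
end
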